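/- arXiv:1410.8837 — 8 statements merged into one kernel-verified Lean document; each statement's English description precedes it below -/
import Mathlib

section
/- If a code C of words has ℓ-gram distance greater than 2·s_syn·ℓ + 2·s_seq + t between any two distinct codewords, then C can correct s_syn substitution errors due to synthesis, s_seq substitution errors due to sequencing, and t coverage errors: formally, for profile vectors, if p(x) and p(y) are distinct codeword profiles with asymmetric distance > 2·s_syn·ℓ + 2·s_seq + t, then no two outputs of the DNA storage channel applied to x and y can coincide. -/
/-- `Δ(u,v) = Σ_i max(u_i - v_i, 0)` for integer vectors. -/
def DeltaZ (N : ℕ) (u v : Fin N → ℤ) : ℤ := ∑ i, max (u i - v i) 0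

/-- The asymmetric distance `d_asym(u,v) = max(Δ(u,v), Δ(v,u))`. -/
def dasymZ (N : ℕ) (u v : Fin N → ℤ) : ℤ := max (DeltaZ N u v) (DeltaZ N v u)

/-- The `L1`-weight of a nonnegative integer vector. -/
def wtZ (N : ℕ) (u : Fin N → ℤ) : ℤ := ∑ i, u i

/-- If two codeword profile vectors have asymmetric distance greater than
`2·s_syn·ℓ + 2·s_seq + t`, then no outputs of the DNA storage channel (with
`s_syn` synthesis substitutions, `s_seq` sequencing substitutions and `t`
coverage errors) applied to the two codewords can coincide. -/
theorem grc_corrects (N ℓ ssyn sseq t : ℕ) (px py : Fin N → ℤ)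
    (hd : (2 * ssyn * ℓ + 2 * sseq + t : ℤ) < dasymZ N px py)
    -- synthesis, sequencing and coverage error vectors for the first codeword
    (e1p e1m e2p e2m et : Fin N → ℤ)
    (he1p : ∀ i, 0 ≤ e1p i) (he1m : ∀ i, 0 ≤ e1m i)
    (he2p : ∀ i, 0 ≤ e2p i) (he2m : ∀ i, 0 ≤ e2m i) (het : ∀ i, 0 ≤ et i)
    (we1p : wtZ N e1p ≤ ssyn * ℓ) (we1m : wtZ N e1m ≤ ssyn * ℓ)
    (we2p : wtZ N e2p ≤ sseq) (we2m : wtZ N e2m ≤ sseq) (wet : wtZ N et ≤ t)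
    -- synthesis, sequencing and coverage error vectors for the second codeword
    (f1p f1m f2p f2m ft : Fin N → ℤ)
    (hf1p : ∀ i, 0 ≤ f1p i) (hf1m : ∀ i, 0 ≤ f1m i)
    (hf2p : ∀ i, 0 ≤ f2p i) (hf2m : ∀ i, 0 ≤ f2m i) (hft : ∀ i, 0 ≤ ft i)
    (wf1p : wtZ N f1p ≤ ssyn * ℓ) (wf1m : wtZ N f1m ≤ ssyn * ℓ)
    (wf2p : wtZ N f2p ≤ sseq) (wf2m : wtZ N f2m ≤ sseq) (wft : wtZ N ft ≤ t) :
    px + e1p - e1m + e2p - e2m - et ≠ py + f1p - f1m + f2p - f2m - ft := by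
  intro h
  have hdiff : ∀ i, px i - py i =
      (f1p i + f2p i + e1m i + e2m i + et i) -
      (e1p i + e2p i + f1m i + f2m i + ft i) := by
    intro i
    have := congrFun h i
    simp only [Pi.add_apply, Pi.sub_apply] at this
    linarith
  have h1 : DeltaZ N px py ≤ 2 * ssyn * ℓ + 2 * sseq + t := by
    have hs : DeltaZ N px py ≤
        ∑ i, (f1p i + f2p i + e1m i + e2m i + et i) := by
      refine Finset.sum_le_sum fun i _ => ?_
      have h1 := hdiff i
      have := he1p i; have := he2p i; have := hf1m i; have := hf2m i; have := hft i
      have := hf1p i; have := hf2p i; have := he1m i; have := he2m i; have := het i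
      exact max_le (by linarith) (by positivity)
    have : (∑ i, (f1p i + f2p i + e1m i + e2m i + et i)) =
        wtZ N f1p + wtZ N f2p + wtZ N e1m + wtZ N e2m + wtZ N et := by
      simp [wtZ, Finset.sum_add_distrib]
    linarith
  have h2 : DeltaZ N py px ≤ 2 * ssyn * ℓ + 2 * sseq + t := by
    have hs : DeltaZ N py px ≤
        ∑ i, (e1p i + e2p i + f1m i + f2m i + ft i) := by
      refine Finset.sum_le_sum fun i _ => ?_
      have h1 := hdiff i
      have := he1p i; have := he2p i; have := hf1m i; have := hf2m i; have := hft i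
      have := hf1p i; have := hf2p i; have := he1m i; have := he2m i; have := het i
      exact max_le (by linarith) (by positivity)
    have : (∑ i, (e1p i + e2p i + f1m i + f2m i + ft i)) =
        wtZ N e1p + wtZ N e2p + wtZ N f1m + wtZ N f2m + wtZ N ft := by
      simp [wtZ, Finset.sum_add_distrib]
    linarith
  have : dasymZ N px py ≤ 2 * ssyn * ℓ + 2 * sseq + t := max_le h1 h2
  linarith
end

section
/- Let D(S) be a strongly connected restricted de Bruijn graph on arc set S. If u is an integer vector indexed by S with all entries strictly positive, satisfying the flow conservation equations B(D(S))·u = 0 and 1^T u = n - ℓ + 1, then there exists a closed word x of length n over the alphabet, all of whose ℓ-grams lie in S, whose ℓ-gram profile vector equals u. -/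
/-!
Take `u z` copies of every arc `z ∈ S`. Flow conservation says that in the resulting multigraph
`D_u` every node has equal in- and out-degree, and it is strongly connected because `D(S)` is, so
Hierholzer's argument gives a closed walk using every arc of `D_u` exactly once: grow a closed
walk by splicing in, at the tail of an unused arc, a closed walk through that arc made of unused
arcs, which exists because the unused arcs are again balanced. Consecutive arcs `z, z'` of a walk
in a de Bruijn graph overlap (`suf z = pre z'`), so the `n - L` arcs of the closed walk, read
cyclically, are the `(L+1)`-grams of a closed word of length `n`, and its profile counts each
arc `z` exactly `u z` times.
-/

/-- Prefix of length `L` of an `(L+1)`-gram. -/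
def pre (q L : ℕ) (z : Fin (L + 1) → Fin q) : Fin L → Fin q := fun i => z i.castSucc

/-- Suffix of length `L` of an `(L+1)`-gram. -/
def suf (q L : ℕ) (z : Fin (L + 1) → Fin q) : Fin L → Fin q := fun i => z i.succ

/-- Node set of the restricted de Bruijn graph `D(S)`: the `L`-grams
appearing in `S`. -/
def VS (q L : ℕ) (S : Finset (Fin (L + 1) → Fin q)) : Finset (Fin L → Fin q) :=
  S.image (pre q L) ∪ S.image (suf q L)

/-- Arc relation of `D(S)`. -/
def step (q L : ℕ) (S : Finset (Fin (L + 1) → Fin q)) (a b : Fin L → Fin q) : Prop :=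
  ∃ z ∈ S, pre q L z = a ∧ suf q L z = b

/-- The `(L+1)`-gram of `x` starting at position `i`. -/
def gram (q ℓ : ℕ) (x : ℕ → Fin q) (i : ℕ) : Fin ℓ → Fin q := fun j => x (i + j)

/-- The profile vector of a word of length `n`. -/
def profile (q ℓ n : ℕ) (x : ℕ → Fin q) (z : Fin ℓ → Fin q) : ℕ :=
  ((Finset.range (n - ℓ + 1)).filter (fun i => gram q ℓ x i = z)).card

open Relation

section Walks

variable {α β : Type*} (t h : β → α)

-- A multidigraph on `α` is a multiset of arcs `m : Multiset β`; arc `z` runs from `t z` to `h z`.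
inductive IsWalk : List β → α → α → Prop
  | nil (a : α) : IsWalk [] a a
  | cons (z : β) {l : List β} {b : α} : IsWalk l (h z) b → IsWalk (z :: l) (t z) b

def ArcAdj (m : Multiset β) (x y : α) : Prop := ∃ w ∈ m, t w = x ∧ h w = y

variable {t h}

namespace IsWalk

variable {l l₁ l₂ : List β} {a b c : α}

lemma append (h₁ : IsWalk t h l₁ a c) (h₂ : IsWalk t h l₂ c b) :
    IsWalk t h (l₁ ++ l₂) a b := by
  induction h₁ with
  | nil => exact h₂
  | cons z _ ih => exact .cons z (ih h₂)

lemma exists_eq_append_of_mem (hl : IsWalk t h l a b) {z : β} (hz : z ∈ l) :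
    ∃ l₁ l₂, l = l₁ ++ l₂ ∧ IsWalk t h l₁ a (h z) ∧ IsWalk t h l₂ (h z) b := by
  induction hl with
  | nil => simp at hz
  | @cons w l b hl ih =>
    rcases List.mem_cons.1 hz with rfl | hz
    · exact ⟨[z], l, rfl, .cons z (.nil _), hl⟩
    · obtain ⟨l₁, l₂, rfl, h₁, h₂⟩ := ih hz
      exact ⟨w :: l₁, l₂, rfl, .cons w h₁, h₂⟩

lemma map_tail_add (hl : IsWalk t h l a b) :
    (l : Multiset β).map t + {b} = (l : Multiset β).map h + {a} := by
  induction hl with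
  | nil => simp
  | @cons z l b _ ih =>
    rw [← Multiset.cons_coe, Multiset.map_cons, Multiset.map_cons, ← Multiset.singleton_add,
      ← Multiset.singleton_add, add_assoc, ih]
    abel

lemma eq_of_nil (hl : IsWalk t h [] a b) : a = b := by
  cases hl
  rfl

lemma tail_getElem_zero (hl : IsWalk t h l a b) (hlen : 0 < l.length) : t l[0] = a := by
  cases hl with
  | nil => simp at hlen
  | cons => rfl

lemma tail_getElem_succ (hl : IsWalk t h l a b) (i : ℕ) (hi : i + 1 < l.length) :
    t l[i + 1] = h l[i] := by
  induction hl generalizing i with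
  | nil => simp at hi
  | @cons z l b hl ih =>
    cases i with
    | zero => simpa using hl.tail_getElem_zero (by simp at hi; omega)
    | succ i => simpa using ih i (by simpa using hi)

lemma head_getElem_last (hl : IsWalk t h l a b) (hlen : 0 < l.length) :
    h l[l.length - 1] = b := by
  induction hl with
  | nil => simp at hlen
  | @cons z l b hl ih =>
    cases l with
    | nil => simpa using hl.eq_of_nil
    | cons w l => simpa using ih (by simp)

lemma tail_getElem_succ_mod (hl : IsWalk t h l a a) (hlen : 0 < l.length) (i : ℕ) :
    t (l[(i + 1) % l.length]'(Nat.mod_lt _ hlen)) = h (l[i % l.length]'(Nat.mod_lt _ hlen)) := by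
  have hi := Nat.mod_lt i hlen
  have hsucc : (i + 1) % l.length = (i % l.length + 1) % l.length :=
    (Nat.mod_add_mod _ _ _).symm
  rcases Nat.lt_or_ge (i % l.length + 1) l.length with hlt | hge
  · simp only [hsucc, Nat.mod_eq_of_lt hlt]
    exact hl.tail_getElem_succ _ hlt
  · have hlast : i % l.length = l.length - 1 := by omega
    simp only [hsucc, hlast, Nat.sub_add_cancel hlen, Nat.mod_self]
    rw [hl.tail_getElem_zero hlen, hl.head_getElem_last hlen]

-- The vertices at which `l` splits are closed under the arcs of `l`; if no arc of `r` left them,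
-- they would be closed under all arcs of `l + r`, so by `hconn` they would include `t z₀`.
lemma exists_split_at_tail (hl : IsWalk t h l a b) {r : Multiset β} {z₀ : β}
    (hz₀ : z₀ ∈ r) (hconn : ∀ z ∈ r, ReflTransGen (ArcAdj t h (l + r)) a (t z)) :
    ∃ z ∈ r, ∃ l₁ l₂, l = l₁ ++ l₂ ∧ IsWalk t h l₁ a (t z) ∧
      IsWalk t h l₂ (t z) b := by
  by_contra hnot
  have hvisit : ∀ v, ReflTransGen (ArcAdj t h (l + r)) a v →
      ∃ l₁ l₂, l = l₁ ++ l₂ ∧ IsWalk t h l₁ a v ∧ IsWalk t h l₂ v b := by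
    intro v hv
    induction hv with
    | refl => exact ⟨[], l, rfl, .nil a, hl⟩
    | tail _ hxy ih =>
      obtain ⟨w, hw, rfl, rfl⟩ := hxy
      rcases Multiset.mem_add.1 hw with hw | hw
      · exact hl.exists_eq_append_of_mem (Multiset.mem_coe.1 hw)
      · exact (hnot ⟨w, hw, ih⟩).elim
  exact hnot ⟨z₀, hz₀, hvisit _ (hconn z₀ hz₀)⟩

end IsWalk

-- Walk greedily from `a`: while `a ≠ b`, the balance condition leaves an arc of `r` out of `a`.
lemma exists_walk_of_map_add_eq (r : Multiset β) (a b : α)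
    (hr : r.map t + {b} = r.map h + {a}) :
    ∃ (l : List β) (r' : Multiset β), r = l + r' ∧ IsWalk t h l a b := by
  by_cases hab : a = b
  · exact ⟨[], r, by simp, hab ▸ .nil a⟩
  obtain ⟨z, hz, rfl⟩ : ∃ z ∈ r, t z = a := by
    have : a ∈ r.map t + {b} := hr ▸ Multiset.mem_add.2 (Or.inr (Multiset.mem_singleton_self a))
    simpa [hab] using this
  obtain ⟨r₀, rfl⟩ := Multiset.exists_cons_of_mem hz
  have hr₀ : r₀.map t + {b} = r₀.map h + {h z} := by
    rw [Multiset.map_cons, Multiset.map_cons, ← Multiset.singleton_add,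
      ← Multiset.singleton_add] at hr
    apply add_left_cancel (a := {t z})
    convert hr using 1 <;> abel
  obtain ⟨l, r', rfl, hl⟩ := exists_walk_of_map_add_eq r₀ (h z) b hr₀
  exact ⟨z :: l, r', (Multiset.cons_add _ _ _).symm, .cons z hl⟩
termination_by r.card
decreasing_by simp_all

theorem exists_closed_walk_of_add_eq {m : Multiset β} {a : α} (hbal : m.map t = m.map h)
    (hconn : ∀ z ∈ m, ReflTransGen (ArcAdj t h m) a (t z)) (l : List β) (r : Multiset β)
    (hl : IsWalk t h l a a) (hm : l + r = m) :
    ∃ l' : List β, IsWalk t h l' a a ∧ (l' : Multiset β) = m := by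
  rcases Multiset.empty_or_exists_mem r with rfl | ⟨z₀, hz₀⟩
  · exact ⟨l, hl, by simpa using hm⟩
  obtain ⟨z, hz, l₁, l₂, rfl, h₁, h₂⟩ := hl.exists_split_at_tail hz₀
    fun z hz => hm ▸ hconn z (hm ▸ Multiset.mem_add.2 (Or.inr hz))
  obtain ⟨r₀, rfl⟩ := Multiset.exists_cons_of_mem hz
  have hr₀ : r₀.map t + {t z} = r₀.map h + {h z} := by
    have hcyc := add_right_cancel (h₁.append h₂).map_tail_add
    rw [← hm, Multiset.map_add, Multiset.map_add, hcyc] at hbal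
    rw [add_comm, add_comm _ {h z}, Multiset.singleton_add, Multiset.singleton_add,
      ← Multiset.map_cons, ← Multiset.map_cons]
    exact add_left_cancel hbal
  obtain ⟨c, r', rfl, hc⟩ := exists_walk_of_map_add_eq r₀ (h z) (t z) hr₀
  refine exists_closed_walk_of_add_eq hbal hconn (l₁ ++ (z :: c ++ l₂)) r'
    (h₁.append ((IsWalk.cons z hc).append h₂)) ?_
  rw [← hm]
  simp only [← Multiset.coe_add, ← Multiset.cons_coe, ← Multiset.singleton_add]
  abel
termination_by r.card
decreasing_by simp_all

theorem exists_closed_walk_eq {m : Multiset β} {a : α} (hbal : m.map t = m.map h)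
    (hconn : ∀ z ∈ m, ReflTransGen (ArcAdj t h m) a (t z)) :
    ∃ l : List β, IsWalk t h l a a ∧ (l : Multiset β) = m :=
  exists_closed_walk_of_add_eq hbal hconn [] m (.nil a) (zero_add m)

lemma count_map_sum_replicate_toNat [DecidableEq α] (f : β → α) (S : Finset β)
    (u : β → ℤ) (hu : ∀ z ∈ S, 0 ≤ u z) (v : α) :
    (((∑ z ∈ S, Multiset.replicate (u z).toNat z).map f).count v : ℤ) =
      ∑ z ∈ S with f z = v, u z := by
  rw [← Multiset.coe_mapAddMonoidHom, map_sum]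
  simp only [Multiset.coe_mapAddMonoidHom, Multiset.map_replicate, Multiset.count_sum',
    Multiset.count_replicate, Finset.sum_filter]
  push_cast
  exact Finset.sum_congr rfl fun z hz => by split_ifs <;> simp [hu z hz]

theorem exists_multiset_count_eq_of_flow [DecidableEq α] [DecidableEq β] (S : Finset β)
    (u : β → ℤ)
    (hpos : ∀ z ∈ S, 0 < u z) (hzero : ∀ z ∉ S, u z = 0)
    (hflow : ∀ v, ∑ z ∈ S with h z = v, u z = ∑ z ∈ S with t z = v, u z) :
    ∃ m : Multiset β, (∀ z, (m.count z : ℤ) = u z) ∧ (∀ z, z ∈ m ↔ z ∈ S) ∧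
      (m.card : ℤ) = ∑ z ∈ S, u z ∧ m.map t = m.map h := by
  have hnonneg : ∀ z ∈ S, 0 ≤ u z := fun z hz => (hpos z hz).le
  set m := ∑ z ∈ S, Multiset.replicate (u z).toNat z with hm
  have hcount (z) : (m.count z : ℤ) = u z := by
    have := count_map_sum_replicate_toNat id S u hnonneg z
    rw [Multiset.map_id, ← hm] at this
    by_cases hz : z ∈ S <;> simp_all [Finset.filter_eq']
  refine ⟨m, hcount, fun z => ?_, ?_, Multiset.ext.2 fun v => ?_⟩
  · rw [← Multiset.count_pos, ← Int.natCast_pos, hcount]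
    by_cases hz : z ∈ S <;> simp [hz, hpos, hzero]
  · rw [Multiset.card_sum]
    push_cast
    exact Finset.sum_congr rfl fun z hz => by simp [hnonneg z hz]
  · have := hflow v
    rw [← count_map_sum_replicate_toNat _ S u hnonneg,
      ← count_map_sum_replicate_toNat _ S u hnonneg] at this
    exact_mod_cast this.symm

end Walks

section DeBruijn

open Finset

lemma gram_eq_of_pre_succ_eq_suf {q L : ℕ} (g : ℕ → Fin (L + 1) → Fin q)
    (hg : ∀ i, pre q L (g (i + 1)) = suf q L (g i)) (i : ℕ) :
    gram q (L + 1) (fun j => g j 0) i = g i := by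
  funext ⟨j, hj⟩
  induction j generalizing i with
  | zero => rfl
  | succ j ih =>
    have hstep := congrFun (hg i) ⟨j, by omega⟩
    simp only [gram, pre, suf] at hstep ih ⊢
    rw [show i + (j + 1) = i + 1 + j by omega, ih (i + 1) (by omega)]
    exact hstep

lemma card_filter_range_eq_count {β : Type*} [DecidableEq β] (l : List β) (g : ℕ → β)
    (hg : ∀ i (hi : i < l.length), g i = l[i]) (z : β) :
    #{i ∈ range l.length | g i = z} = l.count z := by
  have hl : (List.range l.length).map g = l :=
    List.ext_getElem (by simp) fun i _ hi => by simp [hg i hi]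
  conv_rhs => rw [← hl]
  rw [← Multiset.coe_count, ← Multiset.map_coe, ← Multiset.range, Multiset.count_map]
  simp only [Finset.card, Finset.filter_val, Finset.range_val, eq_comm]

lemma exists_closed_word_of_isWalk {q L : ℕ} {l : List (Fin (L + 1) → Fin q)}
    {a : Fin L → Fin q} (hl : IsWalk (pre q L) (suf q L) l a a) (hlen : 0 < l.length) :
    ∃ x : ℕ → Fin q, (∀ j : Fin L, x j = x (l.length + j)) ∧
      ∀ i (hi : i < l.length), gram q (L + 1) x i = l[i] := by
  let g i := l[i % l.length]'(Nat.mod_lt _ hlen)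
  have hgram := gram_eq_of_pre_succ_eq_suf g (hl.tail_getElem_succ_mod hlen)
  refine ⟨fun i => g i 0, fun j => congrFun (by simp only [g]; congr 1; simp) 0, fun i hi => ?_⟩
  rw [hgram]
  simp [g, Nat.mod_eq_of_lt hi]

end DeBruijn

/-- If `D(S)` is strongly connected and `u` is a strictly positive integer
vector supported on `S` satisfying the flow conservation equations and whose
entries sum to `n - ℓ + 1`, then `u` is the `ℓ`-gram profile vector of some
closed word of length `n` all of whose `ℓ`-grams lie in `S`. -/
theorem euler_lemma (q L n : ℕ) (S : Finset (Fin (L + 1) → Fin q))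
    (hn : L + 1 ≤ n)
    (hconn : ∀ a ∈ VS q L S, ∀ b ∈ VS q L S,
      Relation.ReflTransGen (step q L S) a b)
    (u : (Fin (L + 1) → Fin q) → ℤ)
    (hpos : ∀ z ∈ S, 0 < u z) (hzero : ∀ z ∉ S, u z = 0)
    (hflow : ∀ v : Fin L → Fin q,
      ∑ z ∈ S.filter (fun z => suf q L z = v), u z =
      ∑ z ∈ S.filter (fun z => pre q L z = v), u z)
    (hsum : ∑ z ∈ S, u z = (n : ℤ) - L) :
    ∃ x : ℕ → Fin q,
      (∀ j : Fin L, x j = x (n - L + j)) ∧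
      (∀ i, i + (L + 1) ≤ n → gram q (L + 1) x i ∈ S) ∧
      (∀ z : Fin (L + 1) → Fin q, (profile q (L + 1) n x z : ℤ) = u z) := by
  obtain ⟨m, hcount, hmem, hcard, hbal⟩ :=
    exists_multiset_count_eq_of_flow S u hpos hzero hflow
  rw [hsum] at hcard
  obtain ⟨z₀, hz₀⟩ : ∃ z₀, z₀ ∈ m := Multiset.card_pos_iff_exists_mem.1 (by omega)
  have hadj : ArcAdj (pre q L) (suf q L) m = step q L S := by
    ext a b
    simp only [ArcAdj, step, hmem]
  obtain ⟨l, hl, rfl⟩ := exists_closed_walk_eq hbal fun z hz => hadj ▸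
    hconn _ (Finset.mem_union_left _ (Finset.mem_image_of_mem _ ((hmem z₀).1 hz₀)))
      _ (Finset.mem_union_left _ (Finset.mem_image_of_mem _ ((hmem z).1 hz)))
  have hlen : l.length = n - L := by
    rw [Multiset.coe_card] at hcard
    omega
  obtain ⟨x, hclosed, hgram⟩ := exists_closed_word_of_isWalk hl (by omega)
  refine ⟨x, hlen ▸ hclosed, fun i hi => ?_, fun z => ?_⟩
  · rw [hgram i (by omega), ← hmem]
    exact Multiset.mem_coe.2 (List.getElem_mem _)
  · rw [profile, show n - (L + 1) + 1 = l.length by omega,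
      card_filter_range_eq_count l _ hgram, ← hcount, Multiset.coe_count]
end

section
/- Every node of the weight-restricted de Bruijn graph D(q, ℓ; q*, [w₁, w₂]) has the same number of incoming and outgoing arcs. -/
/-- The `q*`-weight of a word: the number of symbols lying in `[q-q*, q-1]`. -/
def wtq (q L qs : ℕ) (x : Fin L → Fin q) : ℕ :=
  (Finset.univ.filter (fun i : Fin L => q - qs ≤ (x i : ℕ))).card

/-- Arc set of the weight-restricted de Bruijn graph: `(L+1)`-grams with
`q*`-weight in `[w₁, w₂]`. -/
def Sgram (q L qs w₁ w₂ : ℕ) : Finset (Fin (L + 1) → Fin q) :=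
  Finset.univ.filter (fun z => w₁ ≤ wtq q (L + 1) qs z ∧ wtq q (L + 1) qs z ≤ w₂)

lemma wtq_cons_snoc (q L qs : ℕ) (a : Fin q) (v : Fin L → Fin q) :
    wtq q (L + 1) qs (Fin.cons a v) = wtq q (L + 1) qs (Fin.snoc v a) := by
  unfold wtq
  rw [Finset.card_filter, Finset.card_filter, Fin.sum_univ_succ, Fin.sum_univ_castSucc]
  simp [add_comm]

lemma eq_cons_of_suf (q L : ℕ) (z : Fin (L + 1) → Fin q) (v : Fin L → Fin q)
    (h : suf q L z = v) : z = Fin.cons (z 0) v := by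
  funext i
  refine Fin.cases ?_ (fun j => ?_) i
  · simp
  · simp [← h, suf]

lemma eq_snoc_of_pre (q L : ℕ) (z : Fin (L + 1) → Fin q) (v : Fin L → Fin q)
    (h : pre q L z = v) : z = Fin.snoc v (z (Fin.last L)) := by
  funext i
  refine Fin.lastCases ?_ (fun j => ?_) i
  · simp
  · simp [← h, pre]

/-- Every node of the weight-restricted de Bruijn graph
`D(q, ℓ; q*, [w₁, w₂])` has the same number of incoming and outgoing arcs. -/
theorem balanced_degrees (q L qs w₁ w₂ : ℕ)
    (hqs1 : 1 ≤ qs) (hqs2 : qs ≤ q - 1)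
    (hw1 : 1 ≤ w₁) (hw12 : w₁ < w₂) (hw2 : w₂ ≤ L + 1)
    (v : Fin L → Fin q) :
    ((Sgram q L qs w₁ w₂).filter (fun z => suf q L z = v)).card =
    ((Sgram q L qs w₁ w₂).filter (fun z => pre q L z = v)).card := by
  refine Finset.card_bij' (fun z _ => Fin.snoc v (z 0))
    (fun z _ => Fin.cons (z (Fin.last L)) v) ?_ ?_ ?_ ?_
  · intro z hz
    rw [Finset.mem_filter] at hz ⊢
    obtain ⟨hS, hsuf⟩ := hz
    simp only [Sgram, Finset.mem_filter] at hS ⊢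
    have hz' := eq_cons_of_suf q L z v hsuf
    have hw : wtq q (L + 1) qs (Fin.snoc v (z 0)) = wtq q (L + 1) qs z := by
      rw [← wtq_cons_snoc, ← hz']
    refine ⟨⟨Finset.mem_univ _, by rw [hw]; exact hS.2⟩, ?_⟩
    funext i; simp [pre]
  · intro z hz
    rw [Finset.mem_filter] at hz ⊢
    obtain ⟨hS, hpre⟩ := hz
    simp only [Sgram, Finset.mem_filter] at hS ⊢
    have hz' := eq_snoc_of_pre q L z v hpre
    have hw : wtq q (L + 1) qs (Fin.cons (z (Fin.last L)) v) = wtq q (L + 1) qs z := by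
      rw [wtq_cons_snoc, ← hz']
    refine ⟨⟨Finset.mem_univ _, by rw [hw]; exact hS.2⟩, ?_⟩
    funext i; simp [suf]
  · intro z hz
    rw [Finset.mem_filter] at hz
    have := eq_cons_of_suf q L z v hz.2
    simp [← this]
  · intro z hz
    rw [Finset.mem_filter] at hz
    have := eq_snoc_of_pre q L z v hz.2
    simp [← this]
end

section
/- The weight-restricted de Bruijn graph D(q, ℓ; q*, [w₁, w₂]) is strongly connected, and hence Eulerian. -/
/-!
Whether a word is an arc or a node of `D(q, ℓ; q*, [w₁, w₂])` depends only on its heavy symbols,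
those in `[q - q*, q - 1]`. A cyclic rotation of an arc turns an arc leaving a node into an arc
entering it, so `D` is balanced, and in a balanced digraph reachability is symmetric: the arcs
leaving the set of nodes reachable from `b` all end inside it, so by balance the arcs entering it
all start inside it. It therefore suffices to walk from every node to the single node
`H^w₁ 0^(L - w₁)` (`L = ℓ - 1`, `H` heavy, `0` light).

A walk of length `L` from `x` to `y` reads the word `x y`, and whether it stays in `D` is read off
the heavy-count profile of `x y`. From any node we first reach a 0/1 word of weight `w₁`; from a
0/1 word of weight `w₁` we reach the word obtained by putting `H` in front and deleting the last
heavy symbol, and `L` such rounds pack all heavy symbols at the front.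

Finally, in a balanced digraph in which all arcs are mutually reachable, a longest trail is
closed and uses every arc.
-/

open Finset Relation

section Eulerian

variable {A V : Type*} {S : Finset A} {src tgt : A → V}

def arcRel (S : Finset A) (src tgt : A → V) (a b : V) : Prop :=
  ∃ z ∈ S, src z = a ∧ tgt z = b

def IsBalanced [DecidableEq V] (S : Finset A) (src tgt : A → V) : Prop :=
  ∀ v, #{z ∈ S | src z = v} = #{z ∈ S | tgt z = v}

theorem IsBalanced.reflTransGen_of_arcRel [DecidableEq V] (hS : IsBalanced S src tgt) {a b : V}
    (hab : arcRel S src tgt a b) : ReflTransGen (arcRel S src tgt) b a := by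
  classical
  obtain ⟨z, hz, rfl, rfl⟩ := hab
  set P : V → Prop := ReflTransGen (arcRel S src tgt) (tgt z)
  set U : Finset V := {v ∈ S.image src ∪ S.image tgt | P v}
  have hfiber (f : A → V) (hf : ∀ e ∈ S, f e ∈ S.image src ∪ S.image tgt) :
      #{e ∈ S | P (f e)} = ∑ v ∈ U, #{e ∈ S | f e = v} := by
    rw [card_eq_sum_card_fiberwise (f := f) (t := U)]
    · refine sum_congr rfl fun v hv => ?_
      rw [filter_filter]
      refine congrArg card (filter_congr fun e _ => ⟨And.right, fun he => ⟨he ▸ ?_, he⟩⟩)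
      exact (mem_filter.1 hv).2
    · intro e he
      obtain ⟨heS, hPe⟩ := mem_filter.1 he
      exact mem_filter.2 ⟨hf e heS, hPe⟩
  have hsub : {e ∈ S | P (src e)} ⊆ {e ∈ S | P (tgt e)} := fun e he => by
    obtain ⟨heS, hPe⟩ := mem_filter.1 he
    exact mem_filter.2 ⟨heS, hPe.tail ⟨e, heS, rfl, rfl⟩⟩
  have hcard : #{e ∈ S | P (tgt e)} ≤ #{e ∈ S | P (src e)} := by
    rw [hfiber src fun e he => mem_union_left _ (mem_image_of_mem _ he),
      hfiber tgt fun e he => mem_union_right _ (mem_image_of_mem _ he)]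
    exact (sum_congr rfl fun v _ => (hS v).symm).le
  have hz' : z ∈ {e ∈ S | P (src e)} :=
    (eq_of_subset_of_card_le hsub hcard).symm ▸ mem_filter.2 ⟨hz, ReflTransGen.refl⟩
  exact (mem_filter.1 hz').2

theorem IsBalanced.reflTransGen_symm [DecidableEq V] (hS : IsBalanced S src tgt) {a b : V}
    (h : ReflTransGen (arcRel S src tgt) a b) : ReflTransGen (arcRel S src tgt) b a := by
  induction h with
  | refl => rfl
  | tail _ hbc ih => exact (hS.reflTransGen_of_arcRel hbc).trans ih

theorem List.IsChain.src_head_cons_map_tgt {l : List A}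
    (hl : l.IsChain fun e f => tgt e = src f) (hne : l ≠ []) :
    src (l.head hne) :: l.map tgt = l.map src ++ [tgt (l.getLast hne)] := by
  induction l with
  | nil => exact absurd rfl hne
  | cons a t ih =>
    cases t with
    | nil => rfl
    | cons b t =>
      obtain ⟨hab, hbt⟩ := List.isChain_cons_cons.1 hl
      simp only [List.map_cons, List.head_cons, List.getLast_cons_cons, List.cons_append] at ih ⊢
      rw [hab, ih hbt (List.cons_ne_nil _ _)]

theorem List.IsChain.tgt_mem_map_src {l : List A} (hl : l.IsChain fun e f => tgt e = src f)
    (hne : l ≠ []) (hclosed : tgt (l.getLast hne) = src (l.head hne)) {e : A} (he : e ∈ l) :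
    tgt e ∈ l.map src := by
  have h := hl.src_head_cons_map_tgt hne
  rw [hclosed] at h
  rcases List.mem_append.1 (h ▸ List.mem_cons_of_mem _ (List.mem_map_of_mem he)) with h | h
  · exact h
  · exact List.mem_singleton.1 h ▸ List.mem_map_of_mem (List.head_mem hne)

lemma List.count_map_eq_length_filter [DecidableEq V] (l : List A) (f : A → V) (v : V) :
    (l.map f).count v = (l.filter (fun e => f e = v)).length := by
  rw [List.count_eq_countP, List.countP_map, List.countP_eq_length_filter]
  congr 2

lemma count_map_le_card_filter [DecidableEq A] [DecidableEq V] {l : List A} (hl : l.Nodup)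
    (hS : ∀ e ∈ l, e ∈ S) (f : A → V) (v : V) : (l.map f).count v ≤ #{e ∈ S | f e = v} := by
  rw [List.count_map_eq_length_filter, ← List.toFinset_card_of_nodup (hl.filter _)]
  refine card_le_card fun e he => ?_
  simp only [List.mem_toFinset, List.mem_filter, decide_eq_true_eq] at he
  exact mem_filter.2 ⟨hS e he.1, he.2⟩

lemma card_filter_le_count_map [DecidableEq A] [DecidableEq V] {l : List A} {f : A → V} {v : V}
    (h : ∀ e ∈ S, f e = v → e ∈ l) : #{e ∈ S | f e = v} ≤ (l.map f).count v := by
  rw [List.count_map_eq_length_filter]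
  refine (card_le_card fun e he => ?_).trans (List.toFinset_card_le _)
  obtain ⟨heS, hev⟩ := mem_filter.1 he
  simpa using ⟨h e heS hev, hev⟩

def IsTrail (S : Finset A) (src tgt : A → V) (l : List A) : Prop :=
  l.Nodup ∧ (∀ e ∈ l, e ∈ S) ∧ l.IsChain fun e f => tgt e = src f

theorem IsTrail.length_le [DecidableEq A] {l : List A} (hl : IsTrail S src tgt l) :
    l.length ≤ #S := by
  rw [← List.toFinset_card_of_nodup hl.1]
  exact card_le_card fun e he => hl.2.1 e (List.mem_toFinset.1 he)

theorem exists_longest_trail (S : Finset A) (src tgt : A → V) :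
    ∃ t, IsTrail S src tgt t ∧ ∀ l, IsTrail S src tgt l → l.length ≤ t.length := by
  classical
  obtain ⟨t, ht, hlen⟩ :=
    Nat.findGreatest_spec (P := fun n => ∃ l, IsTrail S src tgt l ∧ l.length = n)
      (Nat.zero_le #S) ⟨[], ⟨List.nodup_nil, by simp, List.isChain_nil⟩, rfl⟩
  exact ⟨t, ht, fun l hl => hlen ▸ Nat.le_findGreatest hl.length_le ⟨l, hl, rfl⟩⟩

theorem IsTrail.concat {t : List A} {e : A} (ht : IsTrail S src tgt t) (heS : e ∈ S)
    (het : e ∉ t) (hlink : ∀ x ∈ t.getLast?, tgt x = src e) : IsTrail S src tgt (t ++ [e]) := by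
  refine ⟨List.nodup_append.2 ⟨ht.1, List.nodup_singleton e, ?_⟩, ?_,
    List.isChain_append.2 ⟨ht.2.2, List.isChain_singleton e, by simpa using hlink⟩⟩
  · simpa using fun x hx (hxe : x = e) => het (hxe ▸ hx)
  · simpa [or_imp, forall_and] using ⟨ht.2.1, heS⟩

theorem IsTrail.rotate {c₁ c₂ : List A} {e₀ : A} (ht : IsTrail S src tgt (c₁ ++ e₀ :: c₂))
    (hne : c₁ ++ e₀ :: c₂ ≠ [])
    (hclosed : tgt ((c₁ ++ e₀ :: c₂).getLast hne) = src ((c₁ ++ e₀ :: c₂).head hne)) :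
    IsTrail S src tgt (e₀ :: (c₂ ++ c₁)) ∧ ∀ x ∈ (e₀ :: (c₂ ++ c₁)).getLast?, tgt x = src e₀ := by
  have hcyc : (↑(e₀ :: (c₂ ++ c₁)) : Cycle A).Chain fun e f => tgt e = src f := by
    rw [← List.cons_append, Cycle.coe_eq_coe.2 List.isRotated_append, Cycle.chain_ne_nil _ hne,
      List.isChain_cons]
    exact ⟨by simpa [List.head?_eq_some_head hne] using hclosed, ht.2.2⟩
  rw [Cycle.chain_coe_cons, ← List.cons_append, List.isChain_append] at hcyc
  have hperm : (e₀ :: (c₂ ++ c₁)).Perm (c₁ ++ e₀ :: c₂) :=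
    List.perm_append_comm (l₁ := e₀ :: c₂) (l₂ := c₁)
  exact ⟨⟨hperm.nodup_iff.2 ht.1, fun e he => ht.2.1 e (hperm.subset he), hcyc.1⟩,
    by simpa using hcyc.2.2⟩

section Longest

variable [DecidableEq A] [DecidableEq V] {t : List A} (ht : IsTrail S src tgt t)
  (hmax : ∀ l, IsTrail S src tgt l → l.length ≤ t.length)
include ht hmax

theorem IsTrail.closed_of_longest (hbal : IsBalanced S src tgt) (hne : t ≠ []) :
    tgt (t.getLast hne) = src (t.head hne) := by
  by_contra hopen
  set v := tgt (t.getLast hne)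
  have hcount : (t.map tgt).count v = (t.map src).count v + 1 := by
    have := congrArg (List.count v) (ht.2.2.src_head_cons_map_tgt hne)
    simpa [List.count_cons, List.count_append, Ne.symm hopen, v] using this
  obtain ⟨e, heS, het, he⟩ : ∃ e ∈ S, e ∉ t ∧ src e = v := by
    by_contra! h
    have h₁ := card_filter_le_count_map (l := t) (f := src) (v := v) fun e he hev =>
      not_not.1 fun het => h e he het hev
    have h₂ := count_map_le_card_filter ht.1 ht.2.1 tgt v
    have := hbal v
    omega
  have hext := ht.concat heS het (by simp [List.getLast?_eq_some_getLast hne, he, v])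
  simpa using hmax _ hext

theorem IsTrail.mem_of_longest (hne : t ≠ []) (hclosed : tgt (t.getLast hne) = src (t.head hne))
    (hconn : ∀ e ∈ S, ∀ f ∈ S, ReflTransGen (arcRel S src tgt) (src e) (src f))
    {g : A} (hg : g ∈ S) : g ∈ t := by
  by_contra hgt
  obtain ⟨f, hfS, hft, e₀, he₀, hsrc⟩ : ∃ f ∈ S, f ∉ t ∧ ∃ e₀ ∈ t, src e₀ = src f := by
    by_contra! H
    have hinv : ∀ x y, arcRel S src tgt x y → x ∈ t.map src → y ∈ t.map src := by
      rintro _ _ ⟨z, hzS, rfl, rfl⟩ hz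
      obtain ⟨e₀, he₀, hz⟩ := List.mem_map.1 hz
      by_cases hzt : z ∈ t
      · exact ht.2.2.tgt_mem_map_src hne hclosed hzt
      · exact absurd hz (H z hzS hzt e₀ he₀)
    have hreach : ∀ y, ReflTransGen (arcRel S src tgt) (src (t.head hne)) y → y ∈ t.map src := by
      intro y hy
      induction hy with
      | refl => exact List.mem_map_of_mem (List.head_mem hne)
      | tail _ hxy ih => exact hinv _ _ hxy ih
    obtain ⟨e₀, he₀, h⟩ :=
      List.mem_map.1 (hreach _ (hconn _ (ht.2.1 _ (List.head_mem hne)) g hg))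
    exact H g hg hgt e₀ he₀ h
  obtain ⟨c₁, c₂, rfl⟩ := List.append_of_mem he₀
  obtain ⟨hrot, hlink⟩ := ht.rotate hne hclosed
  have hext := hrot.concat hfS (by simpa [or_comm, or_left_comm] using hft)
    (by simpa [hsrc] using hlink)
  have := hmax _ hext
  simp only [List.length_append, List.length_cons, List.length_nil] at this
  omega

end Longest

theorem exists_eulerian_circuit [DecidableEq A] [DecidableEq V] (hbal : IsBalanced S src tgt)
    (hconn : ∀ e ∈ S, ∀ f ∈ S, ReflTransGen (arcRel S src tgt) (src e) (src f)) :
    ∃ c : List A, (∀ z, z ∈ c ↔ z ∈ S) ∧ c.Nodup ∧ c.IsChain (fun e f => tgt e = src f) ∧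
      ∀ h : c ≠ [], tgt (c.getLast h) = src (c.head h) := by
  obtain ⟨t, ht, hmax⟩ := exists_longest_trail S src tgt
  rcases eq_or_ne t [] with rfl | hne
  · refine ⟨[], fun z => ⟨by simp, fun hz => ?_⟩, List.nodup_nil, List.isChain_nil,
      fun h => (h rfl).elim⟩
    simpa using hmax [z] ⟨List.nodup_singleton z, by simpa, List.isChain_singleton z⟩
  · have hclosed := ht.closed_of_longest hmax hbal hne
    exact ⟨t, fun z => ⟨ht.2.1 z, ht.mem_of_longest hmax hne hclosed hconn⟩, ht.1, ht.2.2,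
      fun _ => hclosed⟩

end Eulerian

def heavyInd (q qs : ℕ) (s : Fin q) : ℕ := if q - qs ≤ (s : ℕ) then 1 else 0

def heavyCount (q qs : ℕ) (u : ℕ → Fin q) (j : ℕ) : ℕ := ∑ i ∈ range j, heavyInd q qs (u i)

def window {α : Type*} (u : ℕ → α) (k n : ℕ) : Fin n → α := fun i => u (k + i)

section Weight

variable {q qs : ℕ}

lemma heavyInd_le_one (s : Fin q) : heavyInd q qs s ≤ 1 := by
  unfold heavyInd
  split <;> omega

lemma wtq_eq_sum {n : ℕ} (x : Fin n → Fin q) : wtq q n qs x = ∑ i, heavyInd q qs (x i) := by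
  rw [wtq, card_filter]
  rfl

lemma wtq_pre_add_heavyInd {L : ℕ} (z : Fin (L + 1) → Fin q) :
    wtq q L qs (pre q L z) + heavyInd q qs (z (Fin.last L)) = wtq q (L + 1) qs z := by
  simp [wtq_eq_sum, Fin.sum_univ_castSucc, pre]

lemma heavyInd_add_wtq_suf {L : ℕ} (z : Fin (L + 1) → Fin q) :
    heavyInd q qs (z 0) + wtq q L qs (suf q L z) = wtq q (L + 1) qs z := by
  simp [wtq_eq_sum, Fin.sum_univ_succ, suf]

lemma wtq_comp_perm {n : ℕ} (z : Fin n → Fin q) (σ : Equiv.Perm (Fin n)) :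
    wtq q n qs (z ∘ σ) = wtq q n qs z := by
  rw [wtq_eq_sum, wtq_eq_sum]
  exact Equiv.sum_comp σ fun i => heavyInd q qs (z i)

lemma heavyCount_add (u : ℕ → Fin q) (k n : ℕ) :
    heavyCount q qs u (k + n) = heavyCount q qs u k + wtq q n qs (window u k n) := by
  rw [heavyCount, sum_range_add, wtq_eq_sum,
    ← Fin.sum_univ_eq_sum_range (fun i => heavyInd q qs (u (k + i)))]
  rfl

lemma wtq_window_zero (u : ℕ → Fin q) (n : ℕ) :
    wtq q n qs (window u 0 n) = heavyCount q qs u n := by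
  simpa [heavyCount] using (heavyCount_add (qs := qs) u 0 n).symm

end Weight

section DeBruijn

variable {q L qs w₁ w₂ : ℕ}

lemma wtq_bounds_of_mem_VS {a : Fin L → Fin q} (ha : a ∈ VS q L (Sgram q L qs w₁ w₂)) :
    w₁ ≤ wtq q L qs a + 1 ∧ wtq q L qs a ≤ w₂ := by
  simp only [VS, Sgram, mem_union, mem_image, mem_filter, mem_univ, true_and] at ha
  rcases ha with ⟨z, hz, rfl⟩ | ⟨z, hz, rfl⟩
  · have := wtq_pre_add_heavyInd (qs := qs) z
    have := heavyInd_le_one (qs := qs) (z (Fin.last L))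
    omega
  · have := heavyInd_add_wtq_suf (qs := qs) z
    have := heavyInd_le_one (qs := qs) (z 0)
    omega

lemma suf_comp_finRotate_symm (z : Fin (L + 1) → Fin q) :
    suf q L (z ∘ (finRotate (L + 1)).symm) = pre q L z := by
  funext i
  simp only [suf, pre, Function.comp_apply]
  congr 1
  rw [Equiv.symm_apply_eq]
  ext
  simp

lemma isBalanced_Sgram (q L qs w₁ w₂ : ℕ) :
    IsBalanced (Sgram q L qs w₁ w₂) (pre q L) (suf q L) := fun v =>
  card_equiv ((finRotate (L + 1)).arrowCongr (Equiv.refl (Fin q))) fun z => by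
    simp only [mem_filter, Sgram, mem_univ, true_and]
    rw [show (finRotate (L + 1)).arrowCongr (Equiv.refl (Fin q)) z = z ∘ (finRotate (L + 1)).symm
      from rfl, wtq_comp_perm, suf_comp_finRotate_symm]

lemma pre_window (u : ℕ → Fin q) (k : ℕ) : pre q L (window u k (L + 1)) = window u k L := rfl

lemma suf_window (u : ℕ → Fin q) (k : ℕ) :
    suf q L (window u k (L + 1)) = window u (k + 1) L := by
  funext i
  simp only [suf, window, Fin.val_succ]
  congr 1
  omega

lemma reflTransGen_step_window {S : Finset (Fin (L + 1) → Fin q)} (u : ℕ → Fin q) (n : ℕ)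
    (h : ∀ k < n, window u k (L + 1) ∈ S) :
    ReflTransGen (step q L S) (window u 0 L) (window u n L) := by
  induction n with
  | zero => rfl
  | succ n ih =>
    exact (ih fun k hk => h k (by omega)).tail ⟨_, h n (by omega), pre_window u n, suf_window u n⟩

/-- The walk reads the first `L` symbols of `w` followed by `v`; its `k`-th arc has weight
`heavyCount w L - heavyCount w k + heavyCount v (k + 1)`. -/
lemma reflTransGen_step_of_heavyCount (w v : ℕ → Fin q)
    (h : ∀ k < L, w₁ + heavyCount q qs w k ≤ heavyCount q qs w L + heavyCount q qs v (k + 1) ∧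
      heavyCount q qs w L + heavyCount q qs v (k + 1) ≤ w₂ + heavyCount q qs w k) :
    ReflTransGen (step q L (Sgram q L qs w₁ w₂)) (window w 0 L) (window v 0 L) := by
  set u : ℕ → Fin q := fun i => if i < L then w i else v (i - L)
  have hw : ∀ k ≤ L, heavyCount q qs u k = heavyCount q qs w k := fun k hk =>
    sum_congr rfl fun i hi => by simp [u, show i < L by rw [mem_range] at hi; omega]
  have hu₀ : window u 0 L = window w 0 L := funext fun i => by simp [window, u]
  have huL : ∀ n, window u L n = window v 0 n := fun n => funext fun i => by simp [window, u]
  rw [← hu₀, ← huL]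
  refine reflTransGen_step_window u L fun k hk => ?_
  have hsplit := heavyCount_add (qs := qs) u k (L + 1)
  rw [show k + (L + 1) = L + (k + 1) by omega, heavyCount_add, huL, wtq_window_zero, hw k hk.le,
    hw L le_rfl] at hsplit
  simp only [Sgram, mem_filter, mem_univ, true_and]
  have := h k hk
  omega

end DeBruijn

def IsStaircase (c : ℕ → ℕ) : Prop := c 0 = 0 ∧ ∀ k, c k ≤ c (k + 1) ∧ c (k + 1) ≤ c k + 1

def binSeq {α : Type*} (lo hi : α) (c : ℕ → ℕ) : ℕ → α :=
  fun i => if c (i + 1) = c i + 1 then hi else lo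

/-- For the profile `c` of a 0/1 word of weight `w₁`, `gather L w₁ c (k + 1)` is
`min (min (k + 1) w₁) (c k + 1)`: the profile of the word with `H` put in front and its last heavy
symbol deleted. The truncated subtraction makes the same formula usable from a node of any weight
in `[w₁ - 1, w₂]`. -/
def gather (L w₁ : ℕ) (c : ℕ → ℕ) : ℕ → ℕ
  | 0 => 0
  | k + 1 => min (min (k + 1) w₁) (w₁ + c k + 1 - c L)

section Staircase

variable {c : ℕ → ℕ}

lemma IsStaircase.le_self (hc : IsStaircase c) (k : ℕ) : c k ≤ k := by
  induction k with
  | zero => exact hc.1.le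
  | succ k ih => have := hc.2 k; omega

lemma IsStaircase.monotone (hc : IsStaircase c) : Monotone c :=
  monotone_nat_of_le_succ fun k => (hc.2 k).1

lemma isStaircase_heavyCount {q qs : ℕ} (u : ℕ → Fin q) : IsStaircase (heavyCount q qs u) := by
  refine ⟨rfl, fun k => ?_⟩
  have := heavyInd_le_one (qs := qs) (u k)
  simp only [heavyCount, sum_range_succ]
  omega

lemma heavyCount_binSeq {q qs : ℕ} {lo hi : Fin q} (hlo : heavyInd q qs lo = 0)
    (hhi : heavyInd q qs hi = 1) (hc : IsStaircase c) : heavyCount q qs (binSeq lo hi c) = c := by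
  funext j
  induction j with
  | zero => exact hc.1.symm
  | succ j ih =>
    rw [heavyCount, sum_range_succ, ← heavyCount, ih, binSeq]
    have := hc.2 j
    split <;> simp only [hlo, hhi] <;> omega

lemma window_binSeq_congr {α : Type*} {L : ℕ} {d : ℕ → ℕ} (lo hi : α) (h : ∀ k ≤ L, c k = d k) :
    window (binSeq lo hi c) 0 L = window (binSeq lo hi d) 0 L := by
  funext i
  simp only [window, binSeq, zero_add, h i (by omega), h (i + 1) i.isLt]

variable {L w₁ : ℕ}

lemma isStaircase_gather (hc : IsStaircase c) : IsStaircase (gather L w₁ c) := by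
  refine ⟨rfl, fun k => ?_⟩
  cases k with
  | zero => simp only [gather]; omega
  | succ k => simp only [gather]; have := hc.2 k; omega

lemma IsStaircase.gather_apply_L (hc : IsStaircase c) (hw₁ : w₁ ≤ c L + 1) (hL : w₁ ≤ L) :
    gather L w₁ c L = w₁ := by
  cases L with
  | zero => simp only [gather]; omega
  | succ L => simp only [gather]; have := hc.2 L; omega

lemma IsStaircase.gather_bounds {w₂ : ℕ} (hc : IsStaircase c) (hw₁ : w₁ ≤ c L + 1)
    (hw₂ : c L ≤ w₂) (hw₁₂ : w₁ < w₂) (k : ℕ) (hk : k < L) :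
    w₁ + c k ≤ c L + gather L w₁ c (k + 1) ∧ c L + gather L w₁ c (k + 1) ≤ w₂ + c k := by
  have h₁ := hc.le_self k
  have h₂ := hc.monotone hk.le
  simp only [gather]
  omega

lemma ramp_le_gather (hcL : c L = w₁) {m : ℕ} (hm : ∀ k, min (min k w₁) m ≤ c k) (k : ℕ) :
    min (min k w₁) (m + 1) ≤ gather L w₁ c k := by
  cases k with
  | zero => simp
  | succ k => have := hm k; simp only [gather]; omega

lemma IsStaircase.iterate_gather (hc : IsStaircase c) (hcL : c L = w₁) (hL : w₁ ≤ L) (n : ℕ) :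
    IsStaircase ((gather L w₁)^[n] c) ∧ (gather L w₁)^[n] c L = w₁ ∧
      ∀ k, min (min k w₁) n ≤ (gather L w₁)^[n] c k := by
  induction n with
  | zero => exact ⟨hc, hcL, fun k => by simp⟩
  | succ n ih =>
    obtain ⟨hd, hdL, hdm⟩ := ih
    rw [Function.iterate_succ_apply']
    exact ⟨isStaircase_gather hd, hd.gather_apply_L (by omega) hL, ramp_le_gather hdL hdm⟩

end Staircase

section Reach

variable {q L qs w₁ w₂ : ℕ} {lo hi : Fin q} {c : ℕ → ℕ}

lemma reflTransGen_step_gather (hlo : heavyInd q qs lo = 0) (hhi : heavyInd q qs hi = 1)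
    (hw₁₂ : w₁ < w₂) (w : ℕ → Fin q) (hw₁ : w₁ ≤ heavyCount q qs w L + 1)
    (hw₂ : heavyCount q qs w L ≤ w₂) :
    ReflTransGen (step q L (Sgram q L qs w₁ w₂)) (window w 0 L)
      (window (binSeq lo hi (gather L w₁ (heavyCount q qs w))) 0 L) := by
  have hc := isStaircase_heavyCount (qs := qs) w
  refine reflTransGen_step_of_heavyCount w _ fun k hk => ?_
  rw [heavyCount_binSeq hlo hhi (isStaircase_gather hc)]
  exact hc.gather_bounds hw₁ hw₂ hw₁₂ k hk

lemma IsStaircase.reflTransGen_step_iterate_gather (hlo : heavyInd q qs lo = 0)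
    (hhi : heavyInd q qs hi = 1) (hw₁₂ : w₁ < w₂) (hL : w₁ ≤ L) (hc : IsStaircase c)
    (hcL : c L = w₁) (n : ℕ) :
    ReflTransGen (step q L (Sgram q L qs w₁ w₂)) (window (binSeq lo hi c) 0 L)
      (window (binSeq lo hi ((gather L w₁)^[n] c)) 0 L) := by
  induction n with
  | zero => rfl
  | succ n ih =>
    obtain ⟨hd, hdL, -⟩ := hc.iterate_gather hcL hL n
    have := reflTransGen_step_gather (L := L) hlo hhi hw₁₂ (binSeq lo hi ((gather L w₁)^[n] c))
    rw [heavyCount_binSeq hlo hhi hd, ← Function.iterate_succ_apply' (gather L w₁)] at this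
    exact ih.trans (this (by omega) (by omega))

lemma IsStaircase.reflTransGen_step_ramp (hlo : heavyInd q qs lo = 0)
    (hhi : heavyInd q qs hi = 1) (hw₁₂ : w₁ < w₂) (hL : w₁ ≤ L) (hc : IsStaircase c)
    (hcL : c L = w₁) :
    ReflTransGen (step q L (Sgram q L qs w₁ w₂)) (window (binSeq lo hi c) 0 L)
      (window (binSeq lo hi (fun k => min k w₁)) 0 L) := by
  obtain ⟨hd, hdL, hdm⟩ := hc.iterate_gather hcL hL L
  have hramp : ∀ k ≤ L, (gather L w₁)^[L] c k = min k w₁ := fun k hk => by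
    have := hdm k
    have := hd.le_self k
    have := hd.monotone hk
    omega
  rw [← window_binSeq_congr lo hi hramp]
  exact hc.reflTransGen_step_iterate_gather hlo hhi hw₁₂ hL hcL L

lemma reflTransGen_step_ramp_of_mem_VS (hlo : heavyInd q qs lo = 0) (hhi : heavyInd q qs hi = 1)
    (hw₁₂ : w₁ < w₂) (hw₂ : w₂ ≤ L + 1) {a : Fin L → Fin q}
    (ha : a ∈ VS q L (Sgram q L qs w₁ w₂)) :
    ReflTransGen (step q L (Sgram q L qs w₁ w₂)) a
      (window (binSeq lo hi (fun k => min k w₁)) 0 L) := by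
  obtain ⟨h₁, h₂⟩ := wtq_bounds_of_mem_VS ha
  set w : ℕ → Fin q := fun i => if h : i < L then a ⟨i, h⟩ else lo
  have hwa : window w 0 L = a := funext fun i => by simp [window, w]
  have hwL : heavyCount q qs w L = wtq q L qs a := by rw [← wtq_window_zero, hwa]
  have hc := isStaircase_heavyCount (qs := qs) w
  rw [← hwa]
  exact (reflTransGen_step_gather hlo hhi hw₁₂ w (by omega) (by omega)).trans
    ((isStaircase_gather hc).reflTransGen_step_ramp hlo hhi hw₁₂ (by omega)
      (hc.gather_apply_L (by omega) (by omega)))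

end Reach

theorem restricted_deBruijn_eulerian_general (q L qs w₁ w₂ : ℕ)
    (hqs1 : 1 ≤ qs) (hqs2 : qs ≤ q - 1)
    (hw12 : w₁ < w₂) (hw2 : w₂ ≤ L + 1) :
    (∀ a ∈ VS q L (Sgram q L qs w₁ w₂), ∀ b ∈ VS q L (Sgram q L qs w₁ w₂),
      Relation.ReflTransGen (step q L (Sgram q L qs w₁ w₂)) a b) ∧
    ∃ c : List (Fin (L + 1) → Fin q),
      (∀ z, z ∈ c ↔ z ∈ Sgram q L qs w₁ w₂) ∧ c.Nodup ∧
      List.Chain' (fun a b => suf q L a = pre q L b) c ∧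
      ∀ h : c ≠ [], suf q L (c.getLast h) = pre q L (c.head h) := by
  have hbal := isBalanced_Sgram q L qs w₁ w₂
  have hlo : heavyInd q qs ⟨0, by omega⟩ = 0 := if_neg (show ¬ q - qs ≤ 0 by omega)
  have hhi : heavyInd q qs ⟨q - 1, by omega⟩ = 1 := if_pos (show q - qs ≤ q - 1 by omega)
  have hconn : ∀ a ∈ VS q L (Sgram q L qs w₁ w₂), ∀ b ∈ VS q L (Sgram q L qs w₁ w₂),
      ReflTransGen (step q L (Sgram q L qs w₁ w₂)) a b := fun a ha b hb =>
    (reflTransGen_step_ramp_of_mem_VS hlo hhi hw12 hw2 ha).trans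
      (hbal.reflTransGen_symm (reflTransGen_step_ramp_of_mem_VS hlo hhi hw12 hw2 hb))
  refine ⟨hconn, exists_eulerian_circuit hbal fun e he f hf => hconn _ ?_ _ ?_⟩
  · exact mem_union_left _ (mem_image_of_mem _ he)
  · exact mem_union_left _ (mem_image_of_mem _ hf)

/-- The weight-restricted de Bruijn graph `D(q, ℓ; q*, [w₁, w₂])` is strongly
connected, and hence Eulerian: there is a closed walk traversing every arc
exactly once. -/
theorem restricted_deBruijn_eulerian (q L qs w₁ w₂ : ℕ)
    (hqs1 : 1 ≤ qs) (hqs2 : qs ≤ q - 1)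
    (hw1 : 1 ≤ w₁) (hw12 : w₁ < w₂) (hw2 : w₂ ≤ L + 1) :
    (∀ a ∈ VS q L (Sgram q L qs w₁ w₂), ∀ b ∈ VS q L (Sgram q L qs w₁ w₂),
      Relation.ReflTransGen (step q L (Sgram q L qs w₁ w₂)) a b) ∧
    ∃ c : List (Fin (L + 1) → Fin q),
      (∀ z, z ∈ c ↔ z ∈ Sgram q L qs w₁ w₂) ∧ c.Nodup ∧
      List.Chain' (fun a b => suf q L a = pre q L b) c ∧
      ∀ h : c ≠ [], suf q L (c.getLast h) = pre q L (c.head h) :=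
  restricted_deBruijn_eulerian_general q L qs w₁ w₂ hqs1 hqs2 hw12 hw2
end

section
/- Let D(S) be strongly connected. The vertex set of the polytope P(S) = {u ∈ R^{|S|} : B(D(S))u = 0, 1^T u = 1, u ≥ 0} is exactly {χ(C)/|C| : C is a directed cycle in D(S)}, where χ(C) is the 0-1 incidence vector of the arcs of C and |C| its length. -/
/-- The polytope `P(S) = {u : B(D(S))u = 0, 1ᵀu = 1, u ≥ 0}`. -/
def PS (q L : ℕ) (S : Finset (Fin (L + 1) → Fin q)) : Set ({z // z ∈ S} → ℝ) :=
  {u | (∀ v : Fin L → Fin q,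
          ∑ z : {z // z ∈ S},
            ((if suf q L z.1 = v then (1 : ℝ) else 0) -
              (if pre q L z.1 = v then 1 else 0)) * u z = 0) ∧
       (∑ z : {z // z ∈ S}, u z = 1) ∧ ∀ z, 0 ≤ u z}

/-- A directed cycle in `D(S)`: a nonempty closed walk, given as the list of
its arcs, whose visited nodes are pairwise distinct (loops are cycles of
length one). -/
def IsCycle (q L : ℕ) (S : Finset (Fin (L + 1) → Fin q))
    (c : List {z // z ∈ S}) : Prop :=
  c ≠ [] ∧
  List.Chain' (fun a b => suf q L a.1 = pre q L b.1) c ∧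
  (∀ h : c ≠ [], suf q L (c.getLast h).1 = pre q L (c.head h).1) ∧
  (c.map (fun z => pre q L z.1)).Nodup

/-!
`P(S)` is the set of normalized nonnegative circulations of `D(S)`. Flow conservation forces a
point of `P(S)` whose support lies on a cycle `C` to be constant along `C`, hence equal to
`χ(C)/|C|`; in particular `χ(C)/|C|` is extreme, since both ends of a segment through it are
supported on `C`. Conversely, following arcs of positive weight from any `u ∈ P(S)` must revisit a
node, so the support of `u` contains a cycle `C`. If `t > 0` is largest with `t χ(C)/|C| ≤ u`,
the remainder `u - t χ(C)/|C|` is a nonnegative circulation of total weight `1 - t`, so unless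
`u = χ(C)/|C|`, rescaling it exhibits `u` as an interior point of a segment in `P(S)`.
-/

open Finset

lemma sum_univ_filter_count_eq_countP {α : Type*} [Fintype α] [BEq α] [LawfulBEq α]
    (p : α → Prop) [DecidablePred p] (l : List α) :
    ∑ a with p a, l.count a = l.countP (p ·) := by
  classical
  induction l with
  | nil => simp
  | cons x l ih => simp [List.count_cons, sum_add_distrib, List.countP_cons, ih, sum_ite_eq]

lemma sum_filter_eq_of_injOn {α γ M : Type*} [Fintype α] [DecidableEq γ] [AddCommMonoid M]
    {l : List α} {g : α → γ} (hg : ∀ x ∈ l, ∀ y ∈ l, g x = g y → x = y) {u : α → M}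
    (hsupp : ∀ x ∉ l, u x = 0) {a : α} (ha : a ∈ l) : ∑ x with g x = g a, u x = u a := by
  refine sum_eq_single_of_mem a (by simp) fun x hx hxa => ?_
  by_cases hxl : x ∈ l
  · exact absurd (hg x hxl a ha (mem_filter.mp hx).2) hxa
  · exact hsupp x hxl

namespace Circulation

variable {α β : Type*}

section Definitions

variable (src tgt : α → β)

structure IsDirectedCycle (l : List α) : Prop where
  ne_nil : l ≠ []
  isChain : l.IsChain fun a b => tgt a = src b
  tgt_getLast : tgt (l.getLast ne_nil) = src (l.head ne_nil)
  nodup_map_src : (l.map src).Nodup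

noncomputable def cycleVector [BEq α] (l : List α) : α → ℝ := fun a => (l.count a : ℝ) / l.length

variable [Fintype α] [DecidableEq β]

def circulations : Submodule ℝ (α → ℝ) where
  carrier := {u | ∀ v, ∑ a with tgt a = v, u a = ∑ a with src a = v, u a}
  add_mem' {u w} hu hw v := by simp only [Pi.add_apply, sum_add_distrib, hu v, hw v]
  zero_mem' v := by simp
  smul_mem' r u hu v := by simp only [Pi.smul_apply, smul_eq_mul, ← mul_sum, hu v]

def polytope : Set (α → ℝ) := circulations src tgt ∩ stdSimplex ℝ α

lemma convex_polytope : Convex ℝ (polytope src tgt) :=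
  (circulations src tgt).convex.inter (convex_stdSimplex ℝ α)

end Definitions

namespace IsDirectedCycle

variable {src tgt : α → β} {l : List α}

lemma map_tgt_eq_rotate (hl : IsDirectedCycle src tgt l) :
    l.map tgt = (l.map src).rotate 1 := by
  refine List.ext_getElem (by simp) fun i h₁ _ => ?_
  simp only [List.length_map] at h₁
  simp only [List.getElem_map, List.getElem_rotate, List.length_map]
  rcases Nat.lt_or_ge (i + 1) l.length with hi | hi
  · simp only [Nat.mod_eq_of_lt hi]
    exact List.isChain_iff_getElem.mp hl.isChain i hi
  · obtain rfl : i = l.length - 1 := by omega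
    simpa [Nat.sub_add_cancel (List.length_pos_iff.mpr hl.ne_nil), List.getLast_eq_getElem,
      List.head_eq_getElem] using hl.tgt_getLast

lemma map_tgt_perm_map_src (hl : IsDirectedCycle src tgt l) : (l.map tgt).Perm (l.map src) :=
  hl.map_tgt_eq_rotate ▸ List.rotate_perm _ _

lemma nodup (hl : IsDirectedCycle src tgt l) : l.Nodup := .of_map _ hl.nodup_map_src

lemma nodup_map_tgt (hl : IsDirectedCycle src tgt l) : (l.map tgt).Nodup :=
  hl.map_tgt_perm_map_src.nodup_iff.mpr hl.nodup_map_src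

lemma cycleVector_apply [BEq α] [LawfulBEq α] (hl : IsDirectedCycle src tgt l) (a : α) :
    cycleVector l a = if a ∈ l then (l.length : ℝ)⁻¹ else 0 := by
  unfold cycleVector
  split_ifs with ha
  · simp [List.count_eq_one_of_mem hl.nodup ha]
  · simp [List.count_eq_zero.mpr ha]

variable [Fintype α] [DecidableEq β]

lemma exists_const_of_support {u : α → ℝ} (hl : IsDirectedCycle src tgt l)
    (hu : u ∈ circulations src tgt) (hsupp : ∀ a ∉ l, u a = 0) : ∃ x, ∀ a ∈ l, u a = x := by
  -- within the support, `l[i]` is the only arc into `tgt l[i]` and `l[i + 1]` the only one out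
  have hstep : ∀ i (hi : i + 1 < l.length), u l[i] = u l[i + 1] := by
    intro i hi
    have hflow := hu (tgt l[i])
    rwa [sum_filter_eq_of_injOn (List.inj_on_of_nodup_map hl.nodup_map_tgt) hsupp
      (List.getElem_mem _), List.isChain_iff_getElem.mp hl.isChain i hi,
      sum_filter_eq_of_injOn (List.inj_on_of_nodup_map hl.nodup_map_src) hsupp
      (List.getElem_mem _)] at hflow
  have hchain : (l.map u).IsChain (· = ·) :=
    List.isChain_iff_getElem.mpr fun i hi => by simpa using hstep i (by simpa using hi)
  refine ⟨u (l.head hl.ne_nil), fun a ha =>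
    List.eq_of_mem_replicate (n := (l.map u).length) ?_⟩
  rw [← List.isChain_eq_iff_eq_replicate.mp hchain _ (by simp [List.head?_eq_some_head hl.ne_nil])]
  exact List.mem_map_of_mem ha

variable [BEq α] [LawfulBEq α]

lemma cycleVector_mem (hl : IsDirectedCycle src tgt l) : cycleVector l ∈ polytope src tgt := by
  refine ⟨fun v => ?_, fun a => by unfold cycleVector; positivity, ?_⟩
  · have hcount := hl.map_tgt_perm_map_src.countP_eq (· = v)
    simp only [List.countP_map] at hcount
    simp only [cycleVector, ← sum_div, ← Nat.cast_sum, sum_univ_filter_count_eq_countP]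
    exact congrArg (fun n : ℕ => (n : ℝ) / l.length) hcount
  · have hlen : (l.length : ℝ) ≠ 0 := by simp [hl.ne_nil]
    have htotal : ∑ a, l.count a = l.length := by
      simpa using sum_univ_filter_count_eq_countP (fun _ : α => True) l
    simp only [cycleVector, ← sum_div, ← Nat.cast_sum, htotal, div_self hlen]

lemma eq_cycleVector_of_support {u : α → ℝ} (hl : IsDirectedCycle src tgt l)
    (hu : u ∈ polytope src tgt) (hsupp : ∀ a ∉ l, u a = 0) : u = cycleVector l := by
  classical
  obtain ⟨x, hx⟩ := hl.exists_const_of_support hu.1 hsupp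
  have hu_eq : u = fun a => if a ∈ l then x else 0 := by
    funext a
    split_ifs with ha
    exacts [hx a ha, hsupp a ha]
  have hsum := hu.2.2
  simp only [hu_eq, ← List.mem_toFinset, sum_ite_mem, univ_inter, sum_const,
    List.toFinset_card_of_nodup hl.nodup, nsmul_eq_mul] at hsum
  rw [hu_eq]
  funext a
  rw [hl.cycleVector_apply, ← eq_inv_of_mul_eq_one_right hsum]

lemma cycleVector_mem_extremePoints (hl : IsDirectedCycle src tgt l) :
    cycleVector l ∈ (polytope src tgt).extremePoints ℝ := by
  refine mem_extremePoints.mpr ⟨hl.cycleVector_mem, fun y hy z hz ⟨s, t, hs, ht, _, hyz⟩ => ?_⟩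
  have hvanish : ∀ a ∉ l, y a = 0 ∧ z a = 0 := by
    intro a ha
    have h := congrFun hyz a
    simp only [Pi.add_apply, Pi.smul_apply, smul_eq_mul, hl.cycleVector_apply, ha,
      if_false] at h
    obtain ⟨hya, hza⟩ := (add_eq_zero_iff_of_nonneg (mul_nonneg hs.le (hy.2.1 a))
      (mul_nonneg ht.le (hz.2.1 a))).mp h
    exact ⟨(mul_eq_zero.mp hya).resolve_left hs.ne', (mul_eq_zero.mp hza).resolve_left ht.ne'⟩
  exact ⟨hl.eq_cycleVector_of_support hy fun a ha => (hvanish a ha).1,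
    hl.eq_cycleVector_of_support hz fun a ha => (hvanish a ha).2⟩

end IsDirectedCycle

section Walks

variable {src tgt : α → β} [Finite α]

lemma exists_isDirectedCycle_of_walk (f : ℕ → α) (hf : ∀ n, tgt (f n) = src (f (n + 1))) :
    ∃ l, IsDirectedCycle src tgt l ∧ ∀ a ∈ l, a ∈ Set.range f := by
  classical
  have hrep : ∃ j, ∃ i < j, src (f i) = src (f j) := by
    obtain ⟨i, j, hij, h⟩ := Finite.exists_ne_map_eq_of_infinite f
    rcases hij.lt_or_gt with hlt | hlt
    exacts [⟨j, i, hlt, congrArg src h⟩, ⟨i, j, hlt, congrArg src h.symm⟩]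
  obtain ⟨i, hij, hsrc⟩ := Nat.find_spec hrep
  -- the walk from `i` up to the first node that repeats, `Nat.find hrep`
  set j := Nat.find hrep
  have hinj : ∀ k k', k < k' → k' < j → src (f k) ≠ src (f k') :=
    fun k k' hkk' hk'j h => Nat.find_min hrep hk'j ⟨k, hkk', h⟩
  refine ⟨List.ofFn fun k : Fin (j - i) => f (i + k), ⟨?_, ?_, ?_, ?_⟩, ?_⟩
  · simpa using Nat.sub_ne_zero_of_lt hij
  · exact List.isChain_ofFn.mpr fun k _ => hf (i + k)
  · rw [List.getLast_ofFn, List.head_ofFn]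
    simpa [show i + (j - i - 1) + 1 = j by omega, ← hsrc] using hf (i + (j - i - 1))
  · rw [List.map_ofFn, List.nodup_ofFn]
    intro k k' h
    by_contra hne
    rcases Fin.lt_or_lt_of_ne hne with hlt | hlt
    · exact hinj _ _ (by simpa using hlt) (by omega) h
    · exact hinj _ _ (by simpa using hlt) (by omega) h.symm
  · simp [List.mem_ofFn]

lemma exists_isDirectedCycle_of_forall_exists_succ {p : α → Prop}
    (hsucc : ∀ a, p a → ∃ b, p b ∧ tgt a = src b) {a₀ : α} (ha₀ : p a₀) :
    ∃ l, IsDirectedCycle src tgt l ∧ ∀ a ∈ l, p a := by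
  choose next hnext using hsucc
  let step : {a // p a} → {a // p a} := fun a => ⟨next a a.2, (hnext a a.2).1⟩
  obtain ⟨l, hl, hrange⟩ := exists_isDirectedCycle_of_walk (src := src) (tgt := tgt)
    (fun n => (step^[n] ⟨a₀, ha₀⟩).1) fun n => by
      rw [Function.iterate_succ_apply']
      exact (hnext _ _).2
  refine ⟨l, hl, fun a ha => ?_⟩
  obtain ⟨n, rfl⟩ := hrange a ha
  exact (step^[n] ⟨a₀, ha₀⟩).2

end Walks

section ExtremePoints

variable [Fintype α] [DecidableEq β] {src tgt : α → β}

lemma exists_pos_succ {u : α → ℝ} (hu : u ∈ polytope src tgt) {a : α} (ha : 0 < u a) :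
    ∃ b, 0 < u b ∧ tgt a = src b := by
  have hin : u a ≤ ∑ b with tgt b = tgt a, u b :=
    single_le_sum (fun b _ => hu.2.1 b) (mem_filter.mpr ⟨mem_univ a, rfl⟩)
  rw [hu.1 (tgt a)] at hin
  obtain ⟨b, hb, hpos⟩ := exists_lt_of_sum_lt (s := {b | src b = tgt a})
    (f := fun _ => (0 : ℝ)) (g := u) (by rw [sum_const_zero]; exact ha.trans_le hin)
  exact ⟨b, hpos, (mem_filter.mp hb).2.symm⟩

lemma exists_isDirectedCycle_pos {u : α → ℝ} (hu : u ∈ polytope src tgt) :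
    ∃ l, IsDirectedCycle src tgt l ∧ ∀ a ∈ l, 0 < u a := by
  obtain ⟨a₀, -, ha₀⟩ := exists_lt_of_sum_lt (f := 0) (s := univ) (g := u) (by simp [hu.2.2])
  exact exists_isDirectedCycle_of_forall_exists_succ (fun a ha => exists_pos_succ hu ha) ha₀

lemma eq_of_mem_extremePoints_of_smul_le {u v : α → ℝ} {t : ℝ}
    (hu : u ∈ (polytope src tgt).extremePoints ℝ) (hv : v ∈ polytope src tgt)
    (ht : 0 < t) (hle : t • v ≤ u) : u = v := by
  by_contra huv
  obtain ⟨⟨hu_circ, -, hu_sum⟩, hu_ext⟩ := mem_extremePoints.mp hu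
  obtain ⟨hv_circ, hv_nonneg, hv_sum⟩ := hv
  set r := u - t • v with hr
  have hr_nonneg : ∀ a, 0 ≤ r a := fun a => sub_nonneg.mpr (hle a)
  have hr_sum : ∑ a, r a = 1 - t := by
    simp [hr, sum_sub_distrib, ← mul_sum, hu_sum, hv_sum]
  have ht1 : t < 1 := by
    by_contra! ht1
    have hr0 : ∑ a, r a = 0 :=
      le_antisymm (by linarith) (sum_nonneg fun a _ => hr_nonneg a)
    have : r = 0 := funext fun a =>
      (sum_eq_zero_iff_of_nonneg fun a _ => hr_nonneg a).mp hr0 a (mem_univ a)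
    rw [hr, show t = 1 by linarith, one_smul, sub_eq_zero] at this
    exact huv this
  set w := (1 - t)⁻¹ • r
  have hw : w ∈ polytope src tgt := by
    refine ⟨(circulations src tgt).smul_mem _ (sub_mem hu_circ (Submodule.smul_mem _ t hv_circ)),
      fun a => mul_nonneg (inv_nonneg.mpr (by linarith)) (hr_nonneg a), ?_⟩
    simp only [w, Pi.smul_apply, smul_eq_mul, ← mul_sum, hr_sum]
    exact inv_mul_cancel₀ (by linarith)
  have hseg : u ∈ openSegment ℝ v w := by
    refine ⟨t, 1 - t, ht, by linarith, by ring, ?_⟩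
    simp only [w, smul_smul, mul_inv_cancel₀ (show 1 - t ≠ 0 by linarith), one_smul, hr]
    abel
  exact huv (hu_ext v ⟨hv_circ, hv_nonneg, hv_sum⟩ w hw hseg).1.symm

variable [BEq α] [LawfulBEq α]

lemma exists_eq_cycleVector_of_mem_extremePoints {u : α → ℝ}
    (hu : u ∈ (polytope src tgt).extremePoints ℝ) :
    ∃ l, IsDirectedCycle src tgt l ∧ u = cycleVector l := by
  classical
  obtain ⟨l, hl, hpos⟩ := exists_isDirectedCycle_pos (extremePoints_subset hu)
  obtain ⟨a₀, ha₀, hmin⟩ := l.toFinset.exists_min_image u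
    ⟨_, List.mem_toFinset.mpr (List.head_mem hl.ne_nil)⟩
  have hlen : (l.length : ℝ) ≠ 0 := by simp [hl.ne_nil]
  -- `(min_l u) * |l|` is the largest `t` with `t • cycleVector l ≤ u`
  refine ⟨l, hl, eq_of_mem_extremePoints_of_smul_le hu hl.cycleVector_mem
    (t := u a₀ * l.length) (mul_pos (hpos a₀ (List.mem_toFinset.mp ha₀))
      (by simpa [Nat.pos_iff_ne_zero] using hl.ne_nil)) fun a => ?_⟩
  rw [Pi.smul_apply, smul_eq_mul, hl.cycleVector_apply]
  split_ifs with ha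
  · rw [mul_assoc, mul_inv_cancel₀ hlen, mul_one]
    exact hmin a (List.mem_toFinset.mpr ha)
  · rw [mul_zero]
    exact (extremePoints_subset hu).2.1 a

theorem extremePoints_polytope :
    (polytope src tgt).extremePoints ℝ =
      {u | ∃ l, IsDirectedCycle src tgt l ∧ u = cycleVector l} :=
  Set.Subset.antisymm (fun _ hu => exists_eq_cycleVector_of_mem_extremePoints hu)
    (by rintro _ ⟨l, hl, rfl⟩; exact hl.cycleVector_mem_extremePoints)

end ExtremePoints

end Circulation

lemma PS_eq_polytope (q L : ℕ) (S : Finset (Fin (L + 1) → Fin q)) :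
    PS q L S = Circulation.polytope (fun z : S => pre q L z.1) (fun z => suf q L z.1) := by
  ext u
  simp only [PS, Circulation.polytope, Circulation.circulations, stdSimplex, sub_mul, ite_mul,
    one_mul, zero_mul, sum_sub_distrib, ← sum_filter, sub_eq_zero]
  exact ⟨fun ⟨h₁, h₂, h₃⟩ => ⟨h₁, h₃, h₂⟩, fun ⟨h₁, h₃, h₂⟩ => ⟨h₁, h₂, h₃⟩⟩

lemma isCycle_iff_isDirectedCycle {q L : ℕ} {S : Finset (Fin (L + 1) → Fin q)} (c : List S) :
    IsCycle q L S c ↔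
      Circulation.IsDirectedCycle (fun z : S => pre q L z.1) (fun z => suf q L z.1) c :=
  ⟨fun ⟨h₁, h₂, h₃, h₄⟩ => ⟨h₁, h₂, h₃ h₁, h₄⟩, fun h => ⟨h.1, h.2, fun _ => h.3, h.4⟩⟩

theorem vertices_PS_general (q L : ℕ) (S : Finset (Fin (L + 1) → Fin q)) :
    {u | u ∈ PS q L S ∧ u ∉ convexHull ℝ (PS q L S \ {u})} =
    {u : {z // z ∈ S} → ℝ | ∃ c : List {z // z ∈ S}, IsCycle q L S c ∧
      u = fun z => (c.count z : ℝ) / (c.length : ℝ)} := by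
  ext u
  rw [Set.mem_ofPred_eq, ← Set.mem_sdiff, PS_eq_polytope,
    ← (Circulation.convex_polytope _ _).mem_extremePoints_iff_mem_sdiff_convexHull_sdiff,
    Circulation.extremePoints_polytope]
  simp only [Set.mem_ofPred_eq, isCycle_iff_isDirectedCycle]
  rfl

/-- If `D(S)` is strongly connected, the vertex set of `P(S)` (points of the
polytope that are not convex combinations of other points) is exactly
`{χ(C)/|C| : C a directed cycle in D(S)}`. -/
theorem vertices_PS (q L : ℕ) (S : Finset (Fin (L + 1) → Fin q))
    (hconn : ∀ a ∈ VS q L S, ∀ b ∈ VS q L S,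
      Relation.ReflTransGen (step q L S) a b) :
    {u | u ∈ PS q L S ∧ u ∉ convexHull ℝ (PS q L S \ {u})} =
    {u : {z // z ∈ S} → ℝ | ∃ c : List {z // z ∈ S}, IsCycle q L S c ∧
      u = fun z => (c.count z : ℝ) / (c.length : ℝ)} :=
  vertices_PS_general q L S
end

section
/- If f: Z → R is a quasipolynomial of degree D (f(t) = c_D(t)t^D + ... + c_0(t) with each c_i periodic and c_D not identically zero) which is monotonically nondecreasing on positive integers, then the leading coefficient function c_D is constant. -/
/-!
Let `T` be a common period of the coefficients. Along a residue class `u + nT` the function is a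
polynomial in `n` whose `n^D`-coefficient is `c_D(u) T^D`, so `f(u + nT) / n^D → c_D(u) T^D`.
Given residues `1 ≤ u ≤ v < u + T`, monotonicity yields
`f(u + nT) ≤ f(v + nT) ≤ f(u + T + nT)`, and passing to the limit gives
`c_D(u) ≤ c_D(v) ≤ c_D(u + T) = c_D(u)`.
-/

open Filter Topology Function Set

lemma exists_common_period {ι α : Type*} (s : Finset ι) (f : ι → ℤ → α)
    (h : ∀ i ∈ s, ∃ T : ℕ, 0 < T ∧ Periodic (f i) T) :
    ∃ T : ℕ, 0 < T ∧ ∀ i ∈ s, Periodic (f i) T := by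
  classical
  induction s using Finset.induction_on with
  | empty => exact ⟨1, one_pos, by simp⟩
  | insert a s _ ih =>
    obtain ⟨T, hT, hs⟩ := ih fun i hi => h i (Finset.mem_insert_of_mem hi)
    obtain ⟨Ta, hTa, ha⟩ := h a (Finset.mem_insert_self a s)
    refine ⟨Ta * T, by positivity, fun i hi => ?_⟩
    rcases Finset.mem_insert.1 hi with rfl | hi
    · simpa [mul_comm] using ha.nat_mul T
    · simpa using (hs i hi).nat_mul Ta

lemma tendsto_add_nat_mul_div_nat (a b : ℝ) :
    Tendsto (fun n : ℕ => (a + n * b) / n) atTop (𝓝 b) := by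
  refine ((tendsto_const_div_atTop_nhds_zero_nat a).add_const b).congr' ?_ |>.trans (by simp)
  filter_upwards [eventually_ne_atTop 0] with n hn
  field_simp

lemma tendsto_add_nat_mul_pow_div_pow {i D : ℕ} (hi : i ≤ D) (a b : ℝ) :
    Tendsto (fun n : ℕ => (a + n * b) ^ i / (n : ℝ) ^ D) atTop
      (𝓝 (if i = D then b ^ D else 0)) := by
  have hpow := (tendsto_add_nat_mul_div_nat a b).pow i
  obtain ⟨k, rfl⟩ := Nat.exists_eq_add_of_le hi
  rcases Nat.eq_zero_or_pos k with rfl | hk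
  · simpa [div_pow] using hpow
  have hinv : Tendsto (fun n : ℕ => ((n : ℝ) ^ k)⁻¹) atTop (𝓝 0) :=
    tendsto_inv_atTop_zero.comp ((tendsto_pow_atTop hk.ne').comp tendsto_natCast_atTop_atTop)
  rw [if_neg (by omega)]
  refine ((hpow.mul hinv).congr' ?_).trans (by simp)
  filter_upwards [eventually_ne_atTop 0] with n hn
  rw [div_pow, pow_add]
  field_simp

lemma tendsto_sum_add_nat_mul_pow_div_pow (D : ℕ) (a : ℕ → ℝ) (x b : ℝ) :
    Tendsto (fun n : ℕ => (∑ i ∈ Finset.range (D + 1), a i * (x + n * b) ^ i) / (n : ℝ) ^ D)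
      atTop (𝓝 (a D * b ^ D)) := by
  have h := tendsto_finsetSum (Finset.range (D + 1)) fun i hi =>
    (tendsto_add_nat_mul_pow_div_pow (Finset.mem_range_succ_iff.1 hi) x b).const_mul (a i)
  rw [Finset.sum_eq_single_of_mem D (by simp) (by simp +contextual)] at h
  simpa [Finset.sum_div, mul_div_assoc] using h

def quasiPoly (D : ℕ) (c : ℕ → ℤ → ℝ) (t : ℤ) : ℝ :=
  ∑ i ∈ Finset.range (D + 1), c i t * (t : ℝ) ^ i

lemma tendsto_quasiPoly_div_pow {D T : ℕ} {c : ℕ → ℤ → ℝ} (hper : ∀ i ≤ D, Periodic (c i) T)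
    (u : ℤ) :
    Tendsto (fun n : ℕ => quasiPoly D c (u + n * T) / (n : ℝ) ^ D) atTop
      (𝓝 (c D u * (T : ℝ) ^ D)) := by
  refine (tendsto_sum_add_nat_mul_pow_div_pow D (fun i => c i u) u T).congr fun n => ?_
  unfold quasiPoly
  congr 1
  refine Finset.sum_congr rfl fun i hi => ?_
  rw [(hper i (Finset.mem_range_succ_iff.1 hi)).nat_mul n u]
  push_cast
  ring

lemma le_of_tendsto_div_pow_of_monotoneOn {g : ℤ → ℝ} (hg : MonotoneOn g (Ici 1)) {D T : ℕ}
    {u v : ℤ} (hu : 1 ≤ u) (huv : u ≤ v) {a b : ℝ}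
    (ha : Tendsto (fun n : ℕ => g (u + n * T) / (n : ℝ) ^ D) atTop (𝓝 a))
    (hb : Tendsto (fun n : ℕ => g (v + n * T) / (n : ℝ) ^ D) atTop (𝓝 b)) : a ≤ b :=
  le_of_tendsto_of_tendsto' ha hb fun n => by
    have hnT : (0 : ℤ) ≤ n * T := by positivity
    gcongr
    exact hg (show (1 : ℤ) ≤ _ by omega) (show (1 : ℤ) ≤ _ by omega) (by omega)

lemma leading_coeff_le_of_monotoneOn {D T : ℕ} (hT : 0 < T) {c : ℕ → ℤ → ℝ}
    (hper : ∀ i ≤ D, Periodic (c i) T) (hmono : MonotoneOn (quasiPoly D c) (Ici 1)) ⦃u v : ℤ⦄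
    (hu : 1 ≤ u) (huv : u ≤ v) : c D u ≤ c D v :=
  le_of_mul_le_mul_right
    (le_of_tendsto_div_pow_of_monotoneOn hmono hu huv (tendsto_quasiPoly_div_pow hper u)
      (tendsto_quasiPoly_div_pow hper v))
    (by positivity)

lemma monotoneOn_quasiPoly {D : ℕ} {c : ℕ → ℤ → ℝ}
    (hmono : ∀ t : ℤ, 1 ≤ t →
      (∑ i ∈ Finset.range (D + 1), c i t * (t : ℝ) ^ i) ≤
      (∑ i ∈ Finset.range (D + 1), c i (t + 1) * ((t : ℝ) + 1) ^ i)) :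
    MonotoneOn (quasiPoly D c) (Ici 1) :=
  monotoneOn_of_le_succ ordConnected_Ici fun t _ ht _ => by
    simpa [quasiPoly, Order.succ_eq_add_one] using hmono t ht

theorem leading_coeff_constant_general (D : ℕ) (c : ℕ → ℤ → ℝ)
    (hper : ∀ i ≤ D, ∃ T : ℕ, 0 < T ∧ ∀ t : ℤ, c i (t + T) = c i t)
    (hmono : ∀ t : ℤ, 1 ≤ t →
      (∑ i ∈ Finset.range (D + 1), c i t * (t : ℝ) ^ i) ≤
      (∑ i ∈ Finset.range (D + 1), c i (t + 1) * ((t : ℝ) + 1) ^ i)) :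
    ∀ s t : ℤ, c D s = c D t := by
  obtain ⟨T, hT, hperT⟩ := exists_common_period (Finset.range (D + 1)) c fun i hi =>
    hper i (Finset.mem_range_succ_iff.1 hi)
  replace hperT : ∀ i ≤ D, Periodic (c i) T := fun i hi =>
    hperT i (Finset.mem_range_succ_iff.2 hi)
  have hTz : (0 : ℤ) < T := by exact_mod_cast hT
  have hle := leading_coeff_le_of_monotoneOn hT hperT (monotoneOn_quasiPoly hmono)
  have hperD := hperT D le_rfl
  intro s t
  obtain ⟨s', ⟨hs', -⟩, es⟩ := hperD.exists_mem_Ico hTz s 1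
  obtain ⟨t', ⟨hst', hts'⟩, et⟩ := hperD.exists_mem_Ico hTz t s'
  rw [es, et]
  refine le_antisymm (hle hs' hst') ?_
  simpa [hperD s'] using hle (hs'.trans hst') hts'.le

/-- If `f(t) = Σ_{i=0}^D c_i(t) t^i` is a quasipolynomial of degree `D`
(each `c_i` periodic, `c_D` not identically zero) which is monotonically
nondecreasing on positive integers, then the leading coefficient function
`c_D` is constant. -/
theorem leading_coeff_constant (D : ℕ) (c : ℕ → ℤ → ℝ)
    (hper : ∀ i ≤ D, ∃ T : ℕ, 0 < T ∧ ∀ t : ℤ, c i (t + T) = c i t)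
    (hcD : ∃ t : ℤ, c D t ≠ 0)
    (hmono : ∀ t : ℤ, 1 ≤ t →
      (∑ i ∈ Finset.range (D + 1), c i t * (t : ℝ) ^ i) ≤
      (∑ i ∈ Finset.range (D + 1), c i (t + 1) * ((t : ℝ) + 1) ^ i)) :
    ∀ s t : ℤ, c D s = c D t :=
  leading_coeff_constant_general D c hper hmono
end

section
/- An edge-disjoint path decomposition of the de Bruijn graph D(q,ℓ) into paths each of length n-ℓ+1 yields an optimal (n, 2(n-ℓ+1); q, ℓ)-*-gram reconstruction code of size q^ℓ/(n-ℓ+1): the words corresponding to the paths pairwise have disjoint sets of ℓ-grams, so the symmetric-difference distance between distinct codewords equals 2(n-ℓ+1), and no larger code with this distance exists. -/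
/-- The set of ℓ-grams occurring in a word of length `n`. -/
def suppGram (q ℓ n : ℕ) (x : ℕ → Fin q) : Set (Fin ℓ → Fin q) :=
  {z | ∃ i, i + ℓ ≤ n ∧ gram q ℓ x i = z}

/-- The distance `d*_gram(x,y)`. -/
noncomputable def dstar (q ℓ n : ℕ) (x y : ℕ → Fin q) : ℕ :=
  (symmDiff (suppGram q ℓ n x) (suppGram q ℓ n y)).ncard

/-!
Read a code `C` through the map `(x, i) ↦ gram x i` on `C ×ˢ Iic (n - ℓ)`. Since every word of
length `n` has at most `n - ℓ + 1` grams, two codewords are at distance `2(n - ℓ + 1)` exactly when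
their gram sets are disjoint and of full size, i.e. exactly when this map is injective on the code.
An injective map into the `q ^ ℓ` grams bounds the size of any code with that distance by
`q ^ ℓ / (n - ℓ + 1)`, and a path decomposition makes the map bijective, so it attains the bound.
-/

open Set Function

theorem Set.ncard_symmDiff_add_two_mul_ncard_inter {α : Type*} {A B : Set α}
    (hA : A.Finite) (hB : B.Finite) :
    (symmDiff A B).ncard + 2 * (A ∩ B).ncard = A.ncard + B.ncard := by
  have hsdiff := ncard_sdiff_add_ncard_of_subset (show A ∩ B ⊆ A ∪ B from inf_le_sup)
    (hA.union hB)
  have hunion := ncard_union_add_ncard_inter A B hA hB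
  rw [symmDiff_eq_sup_sdiff_inf]
  change ((A ∪ B) \ (A ∩ B)).ncard + _ = _
  omega

section Grams

variable {q ℓ n : ℕ}

theorem suppGram_eq_image (hn : ℓ ≤ n) (x : ℕ → Fin q) :
    suppGram q ℓ n x = gram q ℓ x '' Iic (n - ℓ) := by
  ext z
  simp only [suppGram, mem_ofPred_eq, mem_image, mem_Iic]
  exact exists_congr fun i => and_congr_left' (by omega)

theorem ncard_suppGram_le (hn : ℓ ≤ n) (x : ℕ → Fin q) :
    (suppGram q ℓ n x).ncard ≤ n - ℓ + 1 := by
  rw [suppGram_eq_image hn, ← ncard_Iic_nat]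
  exact ncard_image_le (finite_Iic _)

theorem dstar_le (hn : ℓ ≤ n) (x y : ℕ → Fin q) : dstar q ℓ n x y ≤ 2 * (n - ℓ + 1) := by
  have := ncard_symmDiff_add_two_mul_ncard_inter (toFinite (suppGram q ℓ n x))
    (toFinite (suppGram q ℓ n y))
  have := ncard_suppGram_le hn x
  have := ncard_suppGram_le hn y
  unfold dstar
  omega

theorem dstar_eq_iff (hn : ℓ ≤ n) (x y : ℕ → Fin q) :
    dstar q ℓ n x y = 2 * (n - ℓ + 1) ↔ Disjoint (suppGram q ℓ n x) (suppGram q ℓ n y) ∧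
      (suppGram q ℓ n x).ncard = n - ℓ + 1 ∧ (suppGram q ℓ n y).ncard = n - ℓ + 1 := by
  have := ncard_symmDiff_add_two_mul_ncard_inter (toFinite (suppGram q ℓ n x))
    (toFinite (suppGram q ℓ n y))
  have := ncard_suppGram_le hn x
  have := ncard_suppGram_le hn y
  rw [disjoint_iff_inter_eq_empty, ← ncard_eq_zero (toFinite _)]
  unfold dstar
  omega

theorem injOn_uncurry_gram_iff (hn : ℓ ≤ n) {D : Set (ℕ → Fin q)} :
    InjOn (uncurry (gram q ℓ)) (D ×ˢ Iic (n - ℓ)) ↔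
      D.Pairwise (Disjoint on suppGram q ℓ n) ∧
        ∀ x ∈ D, (suppGram q ℓ n x).ncard = n - ℓ + 1 := by
  simp only [Set.Pairwise, onFun, suppGram_eq_image hn, ← ncard_Iic_nat,
    ncard_image_iff (finite_Iic _)]
  constructor
  · intro hinj
    refine ⟨fun x hx y hy hxy => disjoint_left.2 ?_, fun x hx i hi j hj h => ?_⟩
    · rintro _ ⟨i, hi, rfl⟩ ⟨j, hj, h⟩
      exact hxy (congrArg Prod.fst (hinj (mk_mem_prod hy hj) (mk_mem_prod hx hi) h)).symm
    · exact congrArg Prod.snd (hinj (mk_mem_prod hx hi) (mk_mem_prod hx hj) h)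
  · rintro ⟨hdisj, hinj⟩ ⟨x, i⟩ ⟨hx, hi⟩ ⟨y, j⟩ ⟨hy, hj⟩ h
    obtain rfl | hxy := eq_or_ne x y
    · exact Prod.ext rfl (hinj x hx hi hj h)
    · have h' : gram q ℓ x i = gram q ℓ y j := h
      exact (disjoint_left.1 (hdisj hx hy hxy) (mem_image_of_mem _ hi)
        (h' ▸ mem_image_of_mem _ hj)).elim

theorem ncard_mul_le_of_injOn {D : Set (ℕ → Fin q)}
    (hinj : InjOn (uncurry (gram q ℓ)) (D ×ˢ Iic (n - ℓ))) :
    D.ncard * (n - ℓ + 1) ≤ q ^ ℓ := by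
  rw [← ncard_Iic_nat, ← ncard_prod]
  simpa using ncard_le_ncard_of_injOn _ (fun _ _ => mem_univ _) hinj

theorem ncard_mul_le_of_le_dstar (hn : ℓ ≤ n) {D : Set (ℕ → Fin q)}
    (hD : ∀ x ∈ D, ∀ y ∈ D, x ≠ y → 2 * (n - ℓ + 1) ≤ dstar q ℓ n x y) (hcard : 1 < D.ncard) :
    D.ncard * (n - ℓ + 1) ≤ q ^ ℓ := by
  have hopt : ∀ x ∈ D, ∀ y ∈ D, x ≠ y → _ := fun x hx y hy hxy =>
    (dstar_eq_iff hn x y).1 ((dstar_le hn x y).antisymm (hD x hx y hy hxy))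
  refine ncard_mul_le_of_injOn ((injOn_uncurry_gram_iff hn).2 ⟨?_, fun x hx => ?_⟩)
  · exact fun x hx y hy hxy => (hopt x hx y hy hxy).1
  · obtain ⟨y, hy, hyx⟩ := exists_ne_of_one_lt_ncard hcard x
    exact (hopt x hx y hy hyx.symm).2.1

theorem bijOn_uncurry_gram (hn : ℓ ≤ n) {C : Set (ℕ → Fin q)}
    (hdecomp : ∀ z : Fin ℓ → Fin q,
      ∃! p : (ℕ → Fin q) × ℕ, p.1 ∈ C ∧ p.2 + ℓ ≤ n ∧ gram q ℓ p.1 p.2 = z) :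
    BijOn (uncurry (gram q ℓ)) (C ×ˢ Iic (n - ℓ)) univ := by
  have hmem : ∀ p : (ℕ → Fin q) × ℕ, p ∈ C ×ˢ Iic (n - ℓ) ↔ p.1 ∈ C ∧ p.2 + ℓ ≤ n := fun p => by
    rw [mem_prod, mem_Iic]
    exact and_congr_right fun _ => by omega
  refine ⟨fun _ _ => mem_univ _, fun p hp p' hp' h => ?_, fun z _ => ?_⟩
  · exact (hdecomp _).unique ⟨((hmem p).1 hp).1, ((hmem p).1 hp).2, h⟩
      ⟨((hmem p').1 hp').1, ((hmem p').1 hp').2, rfl⟩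
  · obtain ⟨p, ⟨hp, hi, rfl⟩, -⟩ := hdecomp z
    exact ⟨p, (hmem p).2 ⟨hp, hi⟩, rfl⟩

theorem ncard_mul_eq_of_bijOn {C : Set (ℕ → Fin q)}
    (hbij : BijOn (uncurry (gram q ℓ)) (C ×ˢ Iic (n - ℓ)) univ) :
    C.ncard * (n - ℓ + 1) = q ^ ℓ := by
  rw [← ncard_Iic_nat, ← ncard_prod, ← hbij.injOn.ncard_image, hbij.image_eq]
  simp

end Grams

theorem path_decomposition_optimal_grc_general (q ℓ n : ℕ) (hn : ℓ ≤ n)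
    (C : Set (ℕ → Fin q))
    (hdecomp : ∀ z : Fin ℓ → Fin q,
      ∃! p : (ℕ → Fin q) × ℕ, p.1 ∈ C ∧ p.2 + ℓ ≤ n ∧ gram q ℓ p.1 p.2 = z) :
    (∀ x ∈ C, ∀ y ∈ C, x ≠ y → dstar q ℓ n x y = 2 * (n - ℓ + 1)) ∧
    C.ncard * (n - ℓ + 1) = q ^ ℓ ∧
    ∀ C' : Set (ℕ → Fin q),
      (∀ x ∈ C', ∀ y ∈ C', x ≠ y → 2 * (n - ℓ + 1) ≤ dstar q ℓ n x y) →
      C'.ncard ≤ C.ncard := by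
  have hbij := bijOn_uncurry_gram hn hdecomp
  obtain ⟨hdisj, hfull⟩ := (injOn_uncurry_gram_iff hn).1 hbij.injOn
  have hcard := ncard_mul_eq_of_bijOn hbij
  refine ⟨fun x hx y hy hxy => (dstar_eq_iff hn x y).2 ⟨hdisj hx hy hxy, hfull x hx, hfull y hy⟩,
    hcard, fun C' hC' => ?_⟩
  obtain hle | hlt := le_or_gt C'.ncard 1
  · obtain ⟨x, -⟩ | hempty := C'.eq_empty_or_nonempty.symm
    · have : 0 < C.ncard * (n - ℓ + 1) := hcard ▸ pow_pos (x 0).pos ℓ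
      exact hle.trans (Nat.pos_of_mul_pos_right this)
    · simp [hempty]
  · exact Nat.le_of_mul_le_mul_right (hcard ▸ ncard_mul_le_of_le_dstar hn hC' hlt) (Nat.succ_pos _)

/-- An edge-disjoint path decomposition of the de Bruijn graph `D(q,ℓ)` into
paths of length `n-ℓ+1` — i.e. a set `C` of words of length `n` such that
every ℓ-gram occurs exactly once among all codewords and positions — yields an
optimal `(n, 2(n-ℓ+1); q, ℓ)`-`*`-GRC of size `q^ℓ/(n-ℓ+1)`: distinct
codewords have symmetric-difference distance exactly `2(n-ℓ+1)`,
`|C|·(n-ℓ+1) = q^ℓ`, and no code with this minimum distance is larger. -/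
theorem path_decomposition_optimal_grc (q ℓ n : ℕ) (hℓ : 0 < ℓ) (hn : ℓ ≤ n)
    (C : Set (ℕ → Fin q))
    (hdecomp : ∀ z : Fin ℓ → Fin q,
      ∃! p : (ℕ → Fin q) × ℕ, p.1 ∈ C ∧ p.2 + ℓ ≤ n ∧ gram q ℓ p.1 p.2 = z) :
    (∀ x ∈ C, ∀ y ∈ C, x ≠ y → dstar q ℓ n x y = 2 * (n - ℓ + 1)) ∧
    C.ncard * (n - ℓ + 1) = q ^ ℓ ∧
    ∀ C' : Set (ℕ → Fin q),
      (∀ x ∈ C', ∀ y ∈ C', x ≠ y → 2 * (n - ℓ + 1) ≤ dstar q ℓ n x y) →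
      C'.ncard ≤ C.ncard :=
  path_decomposition_optimal_grc_general q ℓ n hn C hdecomp
end

section
/- For |S| = N and d fixed, let p be a prime with p > N and p > d, let α₁,...,α_N be distinct nonzero elements of Z/pZ, and let H be the d×N matrix with H_{i,j} = α_j^i. Then the code C(H, β) = {u ∈ Z_{≥0}^N : H u ≡ β (mod p)} is an (N, d+1)-asymmetric error-correcting code: any two distinct codewords have asymmetric distance at least d+1. -/
/-- `Δ(u,v) = Σ_i max(u_i - v_i, 0)` (natural-number truncated subtraction). -/
def Delta (N : ℕ) (u v : Fin N → ℕ) : ℕ := ∑ i, (u i - v i)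

/-- The asymmetric distance `d_asym(u,v) = max(Δ(u,v), Δ(v,u))`. -/
def dasym (N : ℕ) (u v : Fin N → ℕ) : ℕ := max (Delta N u v) (Delta N v u)

/-!
Let `A` be the multiset containing `α j` with multiplicity `(u j - v j)⁺` and `B` the one
containing it with multiplicity `(v j - u j)⁺`. Equal syndromes of `u` and `v` say exactly that
`A` and `B` have the same power sums in degrees `1, …, d`. If `d_asym(u, v) ≤ d`, both have at
most `d` elements; padded with zeros to size `d` they have, by Newton's identities (usable because
`1, …, d` are invertible mod `p`), the same elementary symmetric functions, hence are the root
multisets of the same monic polynomial. So `A = B`, and since the `α j` are distinct and nonzero,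
`u = v`.
-/

open Finset

namespace Multiset

section NewtonIdentities

variable {R : Type*} [CommRing R]

theorem mul_esymm_eq_sum (s : Multiset R) (k : ℕ) :
    k * s.esymm k = (-1) ^ (k + 1) *
      ∑ a ∈ Finset.HasAntidiagonal.antidiagonal k with a.1 < k,
        (-1) ^ a.1 * s.esymm a.1 * (s.map (· ^ a.2)).sum := by
  classical
  have h := congrArg (MvPolynomial.aeval (R := R) (fun x : s.ToType => (x : R)))
    (MvPolynomial.mul_esymm_eq_sum s.ToType R k)
  simp only [map_mul, map_sum, map_pow, map_neg, map_one, map_natCast,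
    MvPolynomial.aeval_esymm_eq_multiset_esymm, map_univ_coe, MvPolynomial.psum,
    MvPolynomial.aeval_X] at h
  convert h using 5 with a
  exact congrArg Multiset.sum (map_univ_comp_coe s (· ^ a.2)).symm

variable [IsDomain R]

theorem esymm_eq_of_map_pow_sum_eq {s t : Multiset R} {n : ℕ}
    (hn : ∀ k ∈ Set.Icc 1 n, (k : R) ≠ 0)
    (h : ∀ k ∈ Set.Icc 1 n, (s.map (· ^ k)).sum = (t.map (· ^ k)).sum) :
    ∀ k ≤ n, s.esymm k = t.esymm k := by
  intro k
  induction k using Nat.strong_induction_on with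
  | _ k ih =>
    intro hkn
    rcases Nat.eq_zero_or_pos k with rfl | hk
    · simp [esymm]
    refine mul_left_cancel₀ (hn k ⟨hk, hkn⟩) ?_
    rw [mul_esymm_eq_sum, mul_esymm_eq_sum]
    refine congrArg (_ * ·) (Finset.sum_congr rfl fun a ha => ?_)
    rw [Finset.mem_filter, Finset.HasAntidiagonal.mem_antidiagonal] at ha
    rw [ih a.1 ha.2 (by omega), h a.2 ⟨by omega, by omega⟩]

theorem eq_of_esymm_eq {s t : Multiset R} {n : ℕ} (hs : card s = n) (ht : card t = n)
    (h : ∀ k ≤ n, s.esymm k = t.esymm k) : s = t := by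
  have hprod : (s.map fun a => Polynomial.X - Polynomial.C a).prod =
      (t.map fun a => Polynomial.X - Polynomial.C a).prod := by
    rw [prod_X_sub_X_eq_sum_esymm, prod_X_sub_X_eq_sum_esymm, hs, ht]
    refine Finset.sum_congr rfl fun k hk => ?_
    rw [h k (Nat.lt_succ_iff.mp (Finset.mem_range.mp hk))]
  simpa only [Polynomial.roots_multiset_prod_X_sub_C] using congrArg Polynomial.roots hprod

theorem eq_of_map_pow_sum_eq {s t : Multiset R} {n : ℕ} (hs : card s = n) (ht : card t = n)
    (hn : ∀ k ∈ Set.Icc 1 n, (k : R) ≠ 0)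
    (h : ∀ k ∈ Set.Icc 1 n, (s.map (· ^ k)).sum = (t.map (· ^ k)).sum) : s = t :=
  eq_of_esymm_eq hs ht (esymm_eq_of_map_pow_sum_eq hn h)

theorem eq_of_map_pow_sum_eq_of_card_le {s t : Multiset R} {n : ℕ}
    (hs : card s ≤ n) (ht : card t ≤ n) (hs0 : (0 : R) ∉ s) (ht0 : (0 : R) ∉ t)
    (hn : ∀ k ∈ Set.Icc 1 n, (k : R) ≠ 0)
    (h : ∀ k ∈ Set.Icc 1 n, (s.map (· ^ k)).sum = (t.map (· ^ k)).sum) : s = t := by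
  classical
  -- Padding with zeros to size `n` changes no power sum of positive degree.
  let pad (x : Multiset R) : Multiset R := x + replicate (n - card x) 0
  have hcard_pad {x : Multiset R} (hx : card x ≤ n) : card (pad x) = n := by
    rw [card_add, card_replicate, Nat.add_sub_cancel' hx]
  have hpow_pad (x : Multiset R) {k : ℕ} (hk : k ∈ Set.Icc 1 n) :
      ((pad x).map (· ^ k)).sum = (x.map (· ^ k)).sum := by
    have hk0 : k ≠ 0 := Nat.one_le_iff_ne_zero.mp hk.1
    simp [pad, hk0]
  have hfilter_pad {x : Multiset R} (hx0 : (0 : R) ∉ x) : (pad x).filter (· ≠ 0) = x := by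
    rw [filter_add, filter_eq_self.mpr fun _ ha => ne_of_mem_of_not_mem ha hx0, filter_eq_nil.mpr
      (fun a ha => not_not.mpr (eq_of_mem_replicate ha)), add_zero]
  have hpad : pad s = pad t := eq_of_map_pow_sum_eq (hcard_pad hs) (hcard_pad ht) hn
    fun k hk => by rw [hpow_pad s hk, hpow_pad t hk, h k hk]
  rw [← hfilter_pad hs0, hpad, hfilter_pad ht0]

end NewtonIdentities

section WithMultiplicity

variable {ι α : Type*} [Fintype ι]

def withMultiplicity (m : ι → ℕ) (x : ι → α) : Multiset α :=
  ∑ j, replicate (m j) (x j)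

variable (m : ι → ℕ)

theorem card_withMultiplicity (x : ι → α) : card (withMultiplicity m x) = ∑ j, m j := by
  simp [withMultiplicity, card_sum]

theorem count_withMultiplicity [DecidableEq α] {x : ι → α} (hx : Function.Injective x) (j : ι) :
    count (x j) (withMultiplicity m x) = m j := by
  classical
  simp [withMultiplicity, count_sum', count_replicate, hx.eq_iff]

theorem map_pow_sum_withMultiplicity {R : Type*} [CommSemiring R] (x : ι → R) (k : ℕ) :
    ((withMultiplicity m x).map (· ^ k)).sum = ∑ j, (m j : R) * x j ^ k := by
  change (sumAddMonoidHom.comp (mapAddMonoidHom (· ^ k))) (∑ j, replicate (m j) (x j)) = _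
  simp [map_sum, nsmul_eq_mul]

theorem zero_notMem_withMultiplicity [Zero α] {x : ι → α} (hx : ∀ j, x j ≠ 0) :
    (0 : α) ∉ withMultiplicity m x := by
  simp [withMultiplicity, mem_sum, mem_replicate, fun j => (hx j).symm]

end WithMultiplicity

end Multiset

theorem Nat.cast_tsub_sub_cast_tsub {R : Type*} [Ring R] (a b : ℕ) :
    ((a - b : ℕ) : R) - ((b - a : ℕ) : R) = a - b := by
  rcases le_total a b with h | h <;> simp [Nat.sub_eq_zero_of_le, Nat.cast_sub, h]

theorem sum_cast_tsub_mul_eq_of_sum_cast_mul_eq {ι R : Type*} [Fintype ι] [CommRing R]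
    {u v : ι → ℕ} {y : ι → R} (h : ∑ j, (u j : R) * y j = ∑ j, (v j : R) * y j) :
    ∑ j, ((u j - v j : ℕ) : R) * y j = ∑ j, ((v j - u j : ℕ) : R) * y j := by
  rw [← sub_eq_zero, ← sum_sub_distrib] at h ⊢
  simpa only [← sub_mul, Nat.cast_tsub_sub_cast_tsub] using h

open Multiset in
theorem varshamov_aecc_general (N d p : ℕ) [Fact p.Prime] (hd : d < p)
    (α : Fin N → ZMod p) (hinj : Function.Injective α) (hα : ∀ j, α j ≠ 0)
    (β : Fin d → ZMod p) (u v : Fin N → ℕ)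
    (hu : ∀ i : Fin d, ∑ j, (u j : ZMod p) * α j ^ ((i : ℕ) + 1) = β i)
    (hv : ∀ i : Fin d, ∑ j, (v j : ZMod p) * α j ^ ((i : ℕ) + 1) = β i)
    (huv : u ≠ v) :
    d + 1 ≤ dasym N u v := by
  by_contra! hlt
  have hΔuv : Delta N u v ≤ d := by unfold dasym at hlt; omega
  have hΔvu : Delta N v u ≤ d := by unfold dasym at hlt; omega
  have hsyndrome (k : ℕ) (hk : k ∈ Set.Icc 1 d) :
      ∑ j, (u j : ZMod p) * α j ^ k = ∑ j, (v j : ZMod p) * α j ^ k := by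
    obtain ⟨i, rfl⟩ : ∃ i : Fin d, (i : ℕ) + 1 = k := ⟨⟨k - 1, by grind⟩, by grind⟩
    rw [hu, hv]
  have hchar (k : ℕ) (hk : k ∈ Set.Icc 1 d) : (k : ZMod p) ≠ 0 := by
    rw [Ne, ZMod.natCast_eq_zero_iff]
    exact Nat.not_dvd_of_pos_of_lt hk.1 (by grind)
  have hAB : withMultiplicity (fun j => u j - v j) α = withMultiplicity (fun j => v j - u j) α := by
    refine eq_of_map_pow_sum_eq_of_card_le ((card_withMultiplicity _ _).trans_le hΔuv)
      ((card_withMultiplicity _ _).trans_le hΔvu) (zero_notMem_withMultiplicity _ hα)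
      (zero_notMem_withMultiplicity _ hα) hchar fun k hk => ?_
    rw [map_pow_sum_withMultiplicity, map_pow_sum_withMultiplicity]
    exact sum_cast_tsub_mul_eq_of_sum_cast_mul_eq (hsyndrome k hk)
  refine huv (funext fun j => ?_)
  have hcount := congrArg (count (α j)) hAB
  rw [count_withMultiplicity _ hinj, count_withMultiplicity _ hinj] at hcount
  omega

/-- Varshamov's construction: for a prime `p > N`, `p > d`, distinct nonzero
`α₁,...,α_N ∈ Z/pZ`, and `H` the `d × N` matrix with `H_{i,j} = α_j^i`
(`i = 1,...,d`), the code `C(H,β) = {u ∈ Z_{≥0}^N : Hu ≡ β (mod p)}` is an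
`(N, d+1)`-asymmetric error-correcting code: any two distinct codewords have
asymmetric distance at least `d+1`. -/
theorem varshamov_aecc (N d p : ℕ) [Fact p.Prime] (hN : N < p) (hd : d < p)
    (α : Fin N → ZMod p) (hinj : Function.Injective α) (hα : ∀ j, α j ≠ 0)
    (β : Fin d → ZMod p) (u v : Fin N → ℕ)
    (hu : ∀ i : Fin d, ∑ j, (u j : ZMod p) * α j ^ ((i : ℕ) + 1) = β i)
    (hv : ∀ i : Fin d, ∑ j, (v j : ZMod p) * α j ^ ((i : ℕ) + 1) = β i)
    (huv : u ≠ v) :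
    d + 1 ≤ dasym N u v :=
  varshamov_aecc_general N d p hd α hinj hα β u v hu hv huv
end
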